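/- arXiv:1407.7428 — 11 statements merged into one kernel-verified Lean document; each statement's English description precedes it below -/
import Mathlib

section
/- The string rewriting system (A, R) with A = {a,b,c} and rules R = {cbab→cbcb, cbbb→cbcb, cbca→cacb, cbaa→cbca, cbba→cbca, caab→cacb, cabb→cacb, caaa→caca, caba→caca} is terminating: there is no infinite sequence of words u₀ →_R u₁ →_R u₂ →_R ⋯ over A. -/
/-- The three-letter alphabet `{a, b, c}`. -/
inductive ABC : Type
  | a : ABC
  | b : ABC
  | c : ABC

open ABC

/-- Single-step reduction of a string rewriting system `R`:
`u →_R v` iff `u = xℓy` and `v = xry` for some rule `(ℓ, r) ∈ R`. -/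
def Step {α : Type*} (R : Set (List α × List α)) (u v : List α) : Prop :=
  ∃ x y l r, (l, r) ∈ R ∧ u = x ++ l ++ y ∧ v = x ++ r ++ y

/-- The rewriting rules of Example 3.1. -/
def Rex : Set (List ABC × List ABC) :=
  {([c,b,a,b], [c,b,c,b]), ([c,b,b,b], [c,b,c,b]), ([c,b,c,a], [c,a,c,b]),
   ([c,b,a,a], [c,b,c,a]), ([c,b,b,a], [c,b,c,a]),
   ([c,a,a,b], [c,a,c,b]), ([c,a,b,b], [c,a,c,b]),
   ([c,a,a,a], [c,a,c,a]), ([c,a,b,a], [c,a,c,a])}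

/-- number of `a`'s -/
def na : List ABC → ℕ
  | [] => 0
  | a :: t => na t + 1
  | b :: t => na t
  | c :: t => na t

/-- number of `b`'s -/
def nb : List ABC → ℕ
  | [] => 0
  | a :: t => nb t
  | b :: t => nb t + 1
  | c :: t => nb t

/-- number of pairs (i < j) with `b` at i and `a` at j -/
def inva : List ABC → ℕ
  | [] => 0
  | a :: t => inva t
  | b :: t => na t + inva t
  | c :: t => inva t

lemma na_append (s t : List ABC) : na (s ++ t) = na s + na t := by
  induction s with
  | nil => simp [na]
  | cons x s ih => cases x <;> simp [na, ih] <;> omega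

lemma nb_append (s t : List ABC) : nb (s ++ t) = nb s + nb t := by
  induction s with
  | nil => simp [nb]
  | cons x s ih => cases x <;> simp [nb, ih] <;> omega

lemma inva_append (s t : List ABC) :
    inva (s ++ t) = inva s + nb s * na t + inva t := by
  induction s with
  | nil => simp [inva, nb]
  | cons x s ih => cases x <;> simp [inva, nb, na_append, ih] <;> ring

lemma inva_le (u : List ABC) : inva u ≤ nb u * na u := by
  induction u with
  | nil => simp [inva]
  | cons x u ih =>
    cases x <;> simp [inva, na, nb] <;> nlinarith

/-- the termination measure -/
def M (u : List ABC) : ℕ := (na u + nb u) ^ 3 + inva u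

lemma M_dec (x y l r : List ABC) (h : na r + nb r + 1 = na l + nb l) :
    M (x ++ r ++ y) < M (x ++ l ++ y) := by
  have hle := inva_le (x ++ r ++ y)
  simp only [M, na_append, nb_append] at *
  have hm : na x + na l + na y + (nb x + nb l + nb y)
      = na x + na r + na y + (nb x + nb r + nb y) + 1 := by omega
  rw [hm]
  set s := na x + na r + na y + (nb x + nb r + nb y) with hs
  have h1 : (nb x + nb r + nb y) * (na x + na r + na y) ≤ s * s := by nlinarith
  have h2 : s ^ 3 + s * s < (s + 1) ^ 3 := by nlinarith
  omega

lemma step_dec (u v : List ABC) (h : Step Rex u v) : M v < M u := by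
  obtain ⟨x, y, l, r, hmem, hu, hv⟩ := h
  subst hu hv
  simp only [Rex, Set.mem_insert_iff, Set.mem_singleton_iff, Prod.mk.injEq] at hmem
  rcases hmem with ⟨hl, hr⟩ | ⟨hl, hr⟩ | ⟨hl, hr⟩ | ⟨hl, hr⟩ | ⟨hl, hr⟩ |
    ⟨hl, hr⟩ | ⟨hl, hr⟩ | ⟨hl, hr⟩ | ⟨hl, hr⟩ <;> subst hl hr
  · exact M_dec _ _ _ _ (by simp [na, nb])
  · exact M_dec _ _ _ _ (by simp [na, nb])
  · -- the swap rule cbca → cacb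
    simp only [M, na_append, nb_append, inva_append, na, nb, inva]
    omega
  · exact M_dec _ _ _ _ (by simp [na, nb])
  · exact M_dec _ _ _ _ (by simp [na, nb])
  · exact M_dec _ _ _ _ (by simp [na, nb])
  · exact M_dec _ _ _ _ (by simp [na, nb])
  · exact M_dec _ _ _ _ (by simp [na, nb])
  · exact M_dec _ _ _ _ (by simp [na, nb])

/-- The rewriting system `(A, R)` of Example 3.1 is terminating: there is no
infinite sequence `u₀ →_R u₁ →_R u₂ →_R ⋯`. -/
theorem stmt_0 : ¬ ∃ f : ℕ → List ABC, ∀ n : ℕ, Step Rex (f n) (f (n + 1)) := by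
  rintro ⟨f, hf⟩
  have hdec : ∀ n, M (f (n + 1)) < M (f n) := fun n => step_dec _ _ (hf n)
  have key : ∀ n, M (f n) + n ≤ M (f 0) := by
    intro n
    induction n with
    | zero => simp
    | succ n ih => have := hdec n; omega
  have := key (M (f 0) + 1)
  omega
end

section
/- The string rewriting system (A, R) with A = {a,b,c} and rules R = {cbab→cbcb, cbbb→cbcb, cbca→cacb, cbaa→cbca, cbba→cbca, caab→cacb, cabb→cacb, caaa→caca, caba→caca} is confluent: whenever u →*_R v and u →*_R w, there exists a word z over A with v →*_R z and w →*_R z. -/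
open ABC

open Relation

lemma rex_len {l r : List ABC} (h : (l, r) ∈ Rex) : l.length = 4 := by
  simp only [Rex, Set.mem_insert_iff, Set.mem_singleton_iff, Prod.mk.injEq] at h
  rcases h with ⟨rfl,_⟩|⟨rfl,_⟩|⟨rfl,_⟩|⟨rfl,_⟩|⟨rfl,_⟩|⟨rfl,_⟩|⟨rfl,_⟩|⟨rfl,_⟩|⟨rfl,_⟩ <;> rfl

-- concrete step facts for critical pairs
lemma stA (y : List ABC) : Step Rex ([c,a,c,b,a,b] ++ y) ([c,a,c,b,c,b] ++ y) :=
  ⟨[c,a], y, [c,b,a,b], [c,b,c,b], by simp [Rex], by simp, by simp⟩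
lemma stB (y : List ABC) : Step Rex ([c,a,c,b,b,b] ++ y) ([c,a,c,b,c,b] ++ y) :=
  ⟨[c,a], y, [c,b,b,b], [c,b,c,b], by simp [Rex], by simp, by simp⟩
lemma stC (y : List ABC) : Step Rex ([c,b,c,a,c,b] ++ y) ([c,a,c,b,c,b] ++ y) :=
  ⟨[], [c,b] ++ y, [c,b,c,a], [c,a,c,b], by simp [Rex], by simp, by simp⟩
lemma stD (y : List ABC) : Step Rex ([c,a,c,b,a,a] ++ y) ([c,a,c,b,c,a] ++ y) :=
  ⟨[c,a], y, [c,b,a,a], [c,b,c,a], by simp [Rex], by simp, by simp⟩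
lemma stE (y : List ABC) : Step Rex ([c,a,c,b,b,a] ++ y) ([c,a,c,b,c,a] ++ y) :=
  ⟨[c,a], y, [c,b,b,a], [c,b,c,a], by simp [Rex], by simp, by simp⟩
lemma stF (y : List ABC) : Step Rex ([c,b,c,a,c,a] ++ y) ([c,a,c,b,c,a] ++ y) :=
  ⟨[], [c,a] ++ y, [c,b,c,a], [c,a,c,b], by simp [Rex], by simp, by simp⟩

lemma key (l1 r1 l2 r2 : List ABC) (h1 : (l1,r1) ∈ Rex) (h2 : (l2,r2) ∈ Rex)
    (t y1 y2 : List ABC) (heq : l1 ++ y1 = t ++ (l2 ++ y2)) :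
    ∃ d, ReflGen (Step Rex) (r1 ++ y1) d ∧ ReflGen (Step Rex) ((t ++ r2) ++ y2) d := by
  rcases t with _|⟨a1,_|⟨a2,_|⟨a3,_|⟨a4,t'⟩⟩⟩⟩
  ·
    simp only [Rex, Set.mem_insert_iff, Set.mem_singleton_iff, Prod.mk.injEq] at h1 h2
    rcases h1 with ⟨rfl,rfl⟩|⟨rfl,rfl⟩|⟨rfl,rfl⟩|⟨rfl,rfl⟩|⟨rfl,rfl⟩|⟨rfl,rfl⟩|⟨rfl,rfl⟩|⟨rfl,rfl⟩|⟨rfl,rfl⟩ <;>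
    rcases h2 with ⟨rfl,rfl⟩|⟨rfl,rfl⟩|⟨rfl,rfl⟩|⟨rfl,rfl⟩|⟨rfl,rfl⟩|⟨rfl,rfl⟩|⟨rfl,rfl⟩|⟨rfl,rfl⟩|⟨rfl,rfl⟩ <;>
    simp only [List.cons_append, List.nil_append, List.cons.injEq, true_and, and_false,
      false_and, reduceCtorEq] at heq <;>
    first
      | (obtain ⟨rfl,rfl,rfl⟩ := heq
         first
          | exact ⟨_, ReflGen.single (stA y2), ReflGen.single (stC y2)⟩
          | exact ⟨_, ReflGen.single (stB y2), ReflGen.single (stC y2)⟩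
          | exact ⟨_, ReflGen.single (stD y2), ReflGen.single (stF y2)⟩
          | exact ⟨_, ReflGen.single (stE y2), ReflGen.single (stF y2)⟩)
      | (subst heq; exact ⟨_, ReflGen.refl, ReflGen.refl⟩)
      | exact absurd heq (by simp)
      | simp at heq
  ·
    simp only [Rex, Set.mem_insert_iff, Set.mem_singleton_iff, Prod.mk.injEq] at h1 h2
    rcases h1 with ⟨rfl,rfl⟩|⟨rfl,rfl⟩|⟨rfl,rfl⟩|⟨rfl,rfl⟩|⟨rfl,rfl⟩|⟨rfl,rfl⟩|⟨rfl,rfl⟩|⟨rfl,rfl⟩|⟨rfl,rfl⟩ <;>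
    rcases h2 with ⟨rfl,rfl⟩|⟨rfl,rfl⟩|⟨rfl,rfl⟩|⟨rfl,rfl⟩|⟨rfl,rfl⟩|⟨rfl,rfl⟩|⟨rfl,rfl⟩|⟨rfl,rfl⟩|⟨rfl,rfl⟩ <;>
    simp only [List.cons_append, List.nil_append, List.cons.injEq, true_and, and_false,
      false_and, reduceCtorEq] at heq <;>
    first
      | (obtain ⟨rfl,rfl,rfl⟩ := heq
         first
          | exact ⟨_, ReflGen.single (stA y2), ReflGen.single (stC y2)⟩
          | exact ⟨_, ReflGen.single (stB y2), ReflGen.single (stC y2)⟩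
          | exact ⟨_, ReflGen.single (stD y2), ReflGen.single (stF y2)⟩
          | exact ⟨_, ReflGen.single (stE y2), ReflGen.single (stF y2)⟩)
      | (subst heq; exact ⟨_, ReflGen.refl, ReflGen.refl⟩)
      | exact absurd heq (by simp)
      | simp at heq
  ·
    simp only [Rex, Set.mem_insert_iff, Set.mem_singleton_iff, Prod.mk.injEq] at h1 h2
    rcases h1 with ⟨rfl,rfl⟩|⟨rfl,rfl⟩|⟨rfl,rfl⟩|⟨rfl,rfl⟩|⟨rfl,rfl⟩|⟨rfl,rfl⟩|⟨rfl,rfl⟩|⟨rfl,rfl⟩|⟨rfl,rfl⟩ <;>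
    rcases h2 with ⟨rfl,rfl⟩|⟨rfl,rfl⟩|⟨rfl,rfl⟩|⟨rfl,rfl⟩|⟨rfl,rfl⟩|⟨rfl,rfl⟩|⟨rfl,rfl⟩|⟨rfl,rfl⟩|⟨rfl,rfl⟩ <;>
    simp only [List.cons_append, List.nil_append, List.cons.injEq, true_and, and_false,
      false_and, reduceCtorEq] at heq <;>
    first
      | (obtain ⟨rfl,rfl,rfl⟩ := heq
         first
          | exact ⟨_, ReflGen.single (stA y2), ReflGen.single (stC y2)⟩
          | exact ⟨_, ReflGen.single (stB y2), ReflGen.single (stC y2)⟩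
          | exact ⟨_, ReflGen.single (stD y2), ReflGen.single (stF y2)⟩
          | exact ⟨_, ReflGen.single (stE y2), ReflGen.single (stF y2)⟩)
      | (subst heq; exact ⟨_, ReflGen.refl, ReflGen.refl⟩)
      | exact absurd heq (by simp)
      | simp at heq
  ·
    simp only [Rex, Set.mem_insert_iff, Set.mem_singleton_iff, Prod.mk.injEq] at h1 h2
    rcases h1 with ⟨rfl,rfl⟩|⟨rfl,rfl⟩|⟨rfl,rfl⟩|⟨rfl,rfl⟩|⟨rfl,rfl⟩|⟨rfl,rfl⟩|⟨rfl,rfl⟩|⟨rfl,rfl⟩|⟨rfl,rfl⟩ <;>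
    rcases h2 with ⟨rfl,rfl⟩|⟨rfl,rfl⟩|⟨rfl,rfl⟩|⟨rfl,rfl⟩|⟨rfl,rfl⟩|⟨rfl,rfl⟩|⟨rfl,rfl⟩|⟨rfl,rfl⟩|⟨rfl,rfl⟩ <;>
    simp only [List.cons_append, List.nil_append, List.cons.injEq, true_and, and_false,
      false_and, reduceCtorEq] at heq <;>
    first
      | (obtain ⟨rfl,rfl,rfl⟩ := heq
         first
          | exact ⟨_, ReflGen.single (stA y2), ReflGen.single (stC y2)⟩
          | exact ⟨_, ReflGen.single (stB y2), ReflGen.single (stC y2)⟩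
          | exact ⟨_, ReflGen.single (stD y2), ReflGen.single (stF y2)⟩
          | exact ⟨_, ReflGen.single (stE y2), ReflGen.single (stF y2)⟩)
      | (subst heq; exact ⟨_, ReflGen.refl, ReflGen.refl⟩)
      | exact absurd heq (by simp)
      | simp at heq
  · have hl1 : l1.length = 4 := rex_len h1
    have heq' : l1 ++ y1 = [a1,a2,a3,a4] ++ (t' ++ (l2 ++ y2)) := by
      simpa using heq
    obtain ⟨rfl, rfl⟩ := List.append_inj heq' (by simp [hl1])
    refine ⟨((r1 ++ t') ++ r2) ++ y2, ReflGen.single ?_, ReflGen.single ?_⟩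
    · exact ⟨r1 ++ t', y2, l2, r2, h2, by simp, by simp⟩
    · exact ⟨[], t' ++ (r2 ++ y2), [a1,a2,a3,a4], r1, h1, by simp, by simp⟩

lemma reflGen_ctx {A B : List ABC} (x : List ABC)
    (h : ReflGen (Step Rex) A B) : ReflGen (Step Rex) (x ++ A) (x ++ B) := by
  cases h with
  | refl => exact ReflGen.refl
  | single h =>
    obtain ⟨p, q, l, r, hr, rfl, rfl⟩ := h
    exact ReflGen.single ⟨x ++ p, q, l, r, hr, by simp, by simp⟩

lemma diamond : ∀ u v w, Step Rex u v → Step Rex u w →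
    ∃ d, ReflGen (Step Rex) v d ∧ ReflGen (Step Rex) w d := by
  rintro u v w ⟨x1,y1,l1,r1,h1,rfl,rfl⟩ ⟨x2,y2,l2,r2,h2,hu,rfl⟩
  have hu' : x1 ++ (l1 ++ y1) = x2 ++ (l2 ++ y2) := by simpa [List.append_assoc] using hu
  rcases List.append_eq_append_iff.mp hu' with ⟨t, rfl, h⟩ | ⟨t, rfl, h⟩
  · obtain ⟨d, hd1, hd2⟩ := key l1 r1 l2 r2 h1 h2 t y1 y2 h
    refine ⟨x1 ++ d, ?_, ?_⟩
    · simpa [List.append_assoc] using reflGen_ctx x1 hd1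
    · simpa [List.append_assoc] using reflGen_ctx x1 hd2
  · obtain ⟨d, hd1, hd2⟩ := key l2 r2 l1 r1 h2 h1 t y2 y1 h
    refine ⟨x2 ++ d, ?_, ?_⟩
    · simpa [List.append_assoc] using reflGen_ctx x2 hd2
    · simpa [List.append_assoc] using reflGen_ctx x2 hd1

/-- The rewriting system `(A, R)` of Example 3.1 is confluent: whenever
`u →*_R v` and `u →*_R w`, there is `z` with `v →*_R z` and `w →*_R z`. -/
theorem stmt_1 :
    ∀ u v w : List ABC, Relation.ReflTransGen (Step Rex) u v →
      Relation.ReflTransGen (Step Rex) u w →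
      ∃ z : List ABC, Relation.ReflTransGen (Step Rex) v z ∧
        Relation.ReflTransGen (Step Rex) w z := by
  intro u v w huv huw
  exact Relation.church_rosser
    (fun a b c hab hac => by
      obtain ⟨d, hd1, hd2⟩ := diamond a b c hab hac
      exact ⟨d, hd1, hd2.to_reflTransGen⟩) huv huw
end

section
/- Let A = {a,b,c} and R = {cbab→cbcb, cbbb→cbcb, cbca→cacb, cbaa→cbca, cbba→cbca, caab→cacb, cabb→cacb, caaa→caca, caba→caca}. For every even natural number n ≥ 2, both c aⁿ bⁿ⁺¹ →*_R (ca)^{n/2} (cb)^{(n/2)+1} and c bⁿ aⁿ b →*_R (ca)^{n/2} (cb)^{(n/2)+1}; in particular the words aⁿbⁿ⁺¹ and bⁿaⁿb become ↔*_R-equivalent after left-multiplication by c. -/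
open ABC

def wpow {α : Type*} (w : List α) (k : ℕ) : List α :=
  (List.replicate k w).flatten

lemma step_prepend {α : Type*} {R : Set (List α × List α)} {u v : List α} (p : List α)
    (h : Step R u v) : Step R (p ++ u) (p ++ v) := by
  obtain ⟨x, y, l, r, hr, hu, hv⟩ := h
  exact ⟨p ++ x, y, l, r, hr, by simp [hu], by simp [hv]⟩

lemma rtg_prepend {α : Type*} {R : Set (List α × List α)} {u v : List α} (p : List α)
    (h : Relation.ReflTransGen (Step R) u v) :
    Relation.ReflTransGen (Step R) (p ++ u) (p ++ v) := by
  induction h with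
  | refl => exact .refl
  | tail _ hs ih => exact ih.tail (step_prepend p hs)

lemma step_head (X Y Z : ABC) (hX : X = a ∨ X = b) (hY : Y = a ∨ Y = b) (hZ : Z = a ∨ Z = b)
    (t : List ABC) : Step Rex (c :: X :: Y :: Z :: t) (c :: X :: c :: Z :: t) := by
  rcases hX with rfl | rfl <;> rcases hY with rfl | rfl <;> rcases hZ with rfl | rfl
  · exact ⟨[], t, [c,a,a,a], [c,a,c,a], by simp [Rex], rfl, rfl⟩
  · exact ⟨[], t, [c,a,a,b], [c,a,c,b], by simp [Rex], rfl, rfl⟩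
  · exact ⟨[], t, [c,a,b,a], [c,a,c,a], by simp [Rex], rfl, rfl⟩
  · exact ⟨[], t, [c,a,b,b], [c,a,c,b], by simp [Rex], rfl, rfl⟩
  · exact ⟨[], t, [c,b,a,a], [c,b,c,a], by simp [Rex], rfl, rfl⟩
  · exact ⟨[], t, [c,b,a,b], [c,b,c,b], by simp [Rex], rfl, rfl⟩
  · exact ⟨[], t, [c,b,b,a], [c,b,c,a], by simp [Rex], rfl, rfl⟩
  · exact ⟨[], t, [c,b,b,b], [c,b,c,b], by simp [Rex], rfl, rfl⟩

lemma step_swap (s : List ABC) : Step Rex ([c,b,c,a] ++ s) ([c,a,c,b] ++ s) :=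
  ⟨[], s, [c,b,c,a], [c,a,c,b], by simp [Rex], rfl, rfl⟩

def comb : List ABC → List ABC
  | [] => []
  | [x] => [c, x]
  | x :: _ :: t => c :: x :: comb t

theorem sweep : ∀ t : List ABC, (∀ u ∈ t, u = a ∨ u = b) → Even t.length →
    ∀ x, (x = a ∨ x = b) →
    Relation.ReflTransGen (Step Rex) (c :: x :: t) (comb (x :: t))
  | [], _, _, x, _ => by exact .refl
  | [y], _, he, _, _ => by simp at he
  | y :: z :: t', hg, he, x, hx => by
    have hy : y = a ∨ y = b := hg y (by simp)
    have hz : z = a ∨ z = b := hg z (by simp)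
    have ht' : ∀ u ∈ t', u = a ∨ u = b := fun u hu => hg u (by simp [hu])
    have he' : Even t'.length := by
      simpa [Nat.even_add_one] using he
    have tail := rtg_prepend [c, x] (sweep t' ht' he' z hz)
    exact Relation.ReflTransGen.head (step_head x y z hx hy hz t') tail

lemma wpow_succ {α : Type*} (w : List α) (k : ℕ) : wpow w (k+1) = w ++ wpow w k := rfl

lemma wpow_succ' {α : Type*} (w : List α) (k : ℕ) : wpow w (k+1) = wpow w k ++ w := by
  simp [wpow, List.replicate_succ']

lemma comb_rep (x : ABC) : ∀ (k : ℕ) (s : List ABC),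
    comb (List.replicate (2*k) x ++ s) = wpow [c,x] k ++ comb s
  | 0, s => by simp [wpow]
  | k+1, s => by
    rw [show 2*(k+1) = 2*k+1+1 by ring, List.replicate_succ, List.replicate_succ]
    show c :: x :: comb (List.replicate (2*k) x ++ s) = _
    rw [comb_rep x k s, wpow_succ]
    simp

lemma comb_single (x : ABC) : comb [x] = [c, x] := rfl

lemma swap1 : ∀ (i : ℕ) (s : List ABC),
    Relation.ReflTransGen (Step Rex) (wpow [c,b] i ++ [c,a] ++ s) ([c,a] ++ wpow [c,b] i ++ s)
  | 0, s => by
    simp only [wpow, List.replicate_zero, List.flatten_nil, List.nil_append, List.append_nil]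
    exact Relation.ReflTransGen.refl
  | i+1, s => by
    have ih := rtg_prepend [c,b] (swap1 i s)
    have st := step_swap (wpow [c,b] i ++ s)
    rw [wpow_succ]
    refine Relation.ReflTransGen.tail (b := [c,b] ++ ([c,a] ++ wpow [c,b] i ++ s)) ?_ ?_
    · simpa [List.append_assoc] using ih
    · simpa [List.append_assoc] using st

lemma swap2 : ∀ (j i : ℕ) (s : List ABC),
    Relation.ReflTransGen (Step Rex) (wpow [c,b] i ++ wpow [c,a] j ++ s)
      (wpow [c,a] j ++ wpow [c,b] i ++ s)
  | 0, i, s => by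
    simp only [wpow, List.replicate_zero, List.flatten_nil, List.nil_append, List.append_nil]
    exact Relation.ReflTransGen.refl
  | j+1, i, s => by
    have h1 := swap1 i (wpow [c,a] j ++ s)
    have h2 := rtg_prepend [c,a] (swap2 j i s)
    rw [wpow_succ [c,a]]
    refine Relation.ReflTransGen.trans (b := [c,a] ++ (wpow [c,b] i ++ wpow [c,a] j ++ s)) ?_ ?_
    · simpa [List.append_assoc] using h1
    · simpa [List.append_assoc] using h2

lemma rtg_eqv {α : Type*} {R : α → α → Prop} {u v : α} (h : Relation.ReflTransGen R u v) :
    Relation.EqvGen R u v := by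
  induction h with
  | refl => exact .refl _
  | tail _ hs ih => exact .trans _ _ _ ih (.rel _ _ hs)

/-- For every even `n = 2m ≥ 2`, both `caⁿbⁿ⁺¹` and `cbⁿaⁿb` reduce to
`(ca)^{n/2}(cb)^{(n/2)+1}`; in particular `aⁿbⁿ⁺¹` and `bⁿaⁿb` become
`↔*_R`-equivalent after left-multiplication by `c`. -/
theorem stmt_3 :
    ∀ m : ℕ, 1 ≤ m →
      Relation.ReflTransGen (Step Rex)
        ([c] ++ List.replicate (2 * m) a ++ List.replicate (2 * m + 1) b)
        (wpow [c,a] m ++ wpow [c,b] (m + 1)) ∧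
      Relation.ReflTransGen (Step Rex)
        ([c] ++ List.replicate (2 * m) b ++ List.replicate (2 * m) a ++ [b])
        (wpow [c,a] m ++ wpow [c,b] (m + 1)) ∧
      Relation.EqvGen (Step Rex)
        ([c] ++ List.replicate (2 * m) a ++ List.replicate (2 * m + 1) b)
        ([c] ++ List.replicate (2 * m) b ++ List.replicate (2 * m) a ++ [b]) := by
  intro m hm
  obtain ⟨k, rfl⟩ : ∃ k, m = k + 1 := ⟨m - 1, by omega⟩
  -- first derivation
  have good1 : ∀ u ∈ List.replicate (2*k+1) a ++ List.replicate (2*(k+1)+1) b,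
      u = a ∨ u = b := by
    intro u hu
    simp only [List.mem_append, List.mem_replicate] at hu
    tauto
  have even1 : Even (List.replicate (2*k+1) a ++ List.replicate (2*(k+1)+1) b).length := by
    simp only [List.length_append, List.length_replicate]
    exact ⟨2*k+2, by ring⟩
  have e1 : [c] ++ List.replicate (2*(k+1)) a ++ List.replicate (2*(k+1)+1) b
      = c :: a :: (List.replicate (2*k+1) a ++ List.replicate (2*(k+1)+1) b) := by
    rw [show 2*(k+1) = 2*k+1+1 by ring, List.replicate_succ]
    simp
  have combb : comb (List.replicate (2*(k+1)+1) b) = wpow [c,b] (k+2) := by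
    rw [show 2*(k+1)+1 = 2*(k+1)+1 from rfl, List.replicate_succ',
      show (2*(k+1)) = 2*(k+1) from rfl, comb_rep, comb_single, ← wpow_succ']
  have c1 : comb (a :: (List.replicate (2*k+1) a ++ List.replicate (2*(k+1)+1) b))
      = wpow [c,a] (k+1) ++ wpow [c,b] (k+2) := by
    have : a :: (List.replicate (2*k+1) a ++ List.replicate (2*(k+1)+1) b)
        = List.replicate (2*(k+1)) a ++ List.replicate (2*(k+1)+1) b := by
      rw [show 2*(k+1) = 2*k+1+1 by ring]
      simp [List.replicate_succ]
    rw [this, comb_rep, combb]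
  have h1 : Relation.ReflTransGen (Step Rex)
      ([c] ++ List.replicate (2*(k+1)) a ++ List.replicate (2*(k+1)+1) b)
      (wpow [c,a] (k+1) ++ wpow [c,b] (k+1+1)) := by
    rw [e1]
    have := sweep _ good1 even1 a (Or.inl rfl)
    rwa [c1] at this
  -- second derivation
  have good2 : ∀ u ∈ List.replicate (2*k+1) b ++ (List.replicate (2*(k+1)) a ++ [b]),
      u = a ∨ u = b := by
    intro u hu
    simp only [List.mem_append, List.mem_replicate, List.mem_singleton] at hu
    tauto
  have even2 : Even (List.replicate (2*k+1) b ++ (List.replicate (2*(k+1)) a ++ [b])).length := by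
    simp only [List.length_append, List.length_replicate, List.length_singleton]
    exact ⟨2*k+2, by ring⟩
  have e2 : [c] ++ List.replicate (2*(k+1)) b ++ List.replicate (2*(k+1)) a ++ [b]
      = c :: b :: (List.replicate (2*k+1) b ++ (List.replicate (2*(k+1)) a ++ [b])) := by
    rw [show 2*(k+1) = 2*k+1+1 by ring, List.replicate_succ]
    simp
  have c2 : comb (b :: (List.replicate (2*k+1) b ++ (List.replicate (2*(k+1)) a ++ [b])))
      = wpow [c,b] (k+1) ++ (wpow [c,a] (k+1) ++ [c,b]) := by
    have : b :: (List.replicate (2*k+1) b ++ (List.replicate (2*(k+1)) a ++ [b]))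
        = List.replicate (2*(k+1)) b ++ (List.replicate (2*(k+1)) a ++ [b]) := by
      rw [show 2*(k+1) = 2*k+1+1 by ring]
      simp [List.replicate_succ]
    rw [this, comb_rep, comb_rep, comb_single]
  have h2 : Relation.ReflTransGen (Step Rex)
      ([c] ++ List.replicate (2*(k+1)) b ++ List.replicate (2*(k+1)) a ++ [b])
      (wpow [c,a] (k+1) ++ wpow [c,b] (k+1+1)) := by
    rw [e2]
    have hs := sweep _ good2 even2 b (Or.inr rfl)
    rw [c2] at hs
    refine hs.trans ?_
    have := swap2 (k+1) (k+1) [c,b]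
    rw [wpow_succ' [c,b] (k+1)]
    simpa [List.append_assoc] using this
  exact ⟨h1, h2, (rtg_eqv h1).trans _ _ _ ((rtg_eqv h2).symm _ _)⟩
end

section
/- Let A = {a, b₁, b₂, b₃, c₁, c₂, c₃, d₁, d₂, d₃} and let R consist of the rules bᵢa → abᵢ (i ∈ {1,2,3}), c_j b_j → c₁b₁ (j ∈ {2,3}), and b_j d_j → b₁d₁ (j ∈ {2,3}). Then for all j ∈ {2,3} and all k, ℓ ≥ 0: (i) c_j aᵏ b_j ↔*_R c₁ aᵏ b₁, and (ii) c₁ aᵏ b₁ aˡ d_j ↔*_R c_j a^{k+ℓ} b₁ d₁. -/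
/-- The ten-letter alphabet `{a, b₁, b₂, b₃, c₁, c₂, c₃, d₁, d₂, d₃}`. -/
inductive K : Type
  | a : K
  | b1 : K | b2 : K | b3 : K
  | c1 : K | c2 : K | c3 : K
  | d1 : K | d2 : K | d3 : K

open K

/-- The rules `bᵢa → abᵢ` (i ∈ {1,2,3}), `c_j b_j → c₁ b₁` and
`b_j d_j → b₁ d₁` (j ∈ {2,3}) of the Katsura–Kobayashi monoid. -/
def RKK : Set (List K × List K) :=
  {([b1,a], [a,b1]), ([b2,a], [a,b2]), ([b3,a], [a,b3]),
   ([c2,b2], [c1,b1]), ([c3,b3], [c1,b1]),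
   ([b2,d2], [b1,d1]), ([b3,d3], [b1,d1])}

section Aux

open Relation

lemma step_ctx {α : Type*} {R : Set (List α × List α)} {u v : List α} (x y : List α)
    (h : Step R u v) : Step R (x ++ u ++ y) (x ++ v ++ y) := by
  obtain ⟨p, q, l, r, hr, hu, hv⟩ := h
  exact ⟨x ++ p, q ++ y, l, r, hr, by simp [hu], by simp [hv]⟩

lemma eqv_ctx {α : Type*} {R : Set (List α × List α)} {u v : List α} (x y : List α)
    (h : EqvGen (Step R) u v) :
    EqvGen (Step R) (x ++ u ++ y) (x ++ v ++ y) := by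
  induction h with
  | rel _ _ h => exact .rel _ _ (step_ctx x y h)
  | refl _ => exact .refl _
  | symm _ _ _ ih => exact .symm _ _ ih
  | trans _ _ _ _ _ ih1 ih2 => exact .trans _ _ _ ih1 ih2

lemma eqv_of_eq {α : Type*} {R : Set (List α × List α)} {u v : List α} (h : u = v) :
    EqvGen (Step R) u v := h ▸ .refl u

lemma move (b : K) (hb : ([b, a], [a, b]) ∈ RKK) :
    ∀ k, EqvGen (Step RKK) ([b] ++ List.replicate k a) (List.replicate k a ++ [b]) := by
  intro k
  induction k with
  | zero => exact .refl _
  | succ k ih =>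
    apply EqvGen.trans _ ([] ++ [a, b] ++ List.replicate k a) _
      (.rel _ _ ⟨[], List.replicate k a, [b, a], [a, b], hb, by simp [List.replicate_succ], rfl⟩)
    apply EqvGen.trans _ ([a] ++ ([b] ++ List.replicate k a) ++ []) _ (eqv_of_eq (by simp))
    apply EqvGen.trans _ ([a] ++ (List.replicate k a ++ [b]) ++ []) _ (eqv_ctx [a] [] ih)
    exact eqv_of_eq (by simp [List.replicate_succ])

lemma part1 (c b : K) (hcb : ([c, b], [c1, b1]) ∈ RKK) (hb : ([b, a], [a, b]) ∈ RKK)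
    (k : ℕ) :
    EqvGen (Step RKK) ([c] ++ List.replicate k a ++ [b]) ([c1] ++ List.replicate k a ++ [b1]) := by
  apply EqvGen.trans _ ([c] ++ (List.replicate k a ++ [b]) ++ []) _ (eqv_of_eq (by simp))
  apply EqvGen.trans _ ([c] ++ ([b] ++ List.replicate k a) ++ []) _
    (.symm _ _ (eqv_ctx [c] [] (move b hb k)))
  apply EqvGen.trans _ ([] ++ [c, b] ++ List.replicate k a) _ (eqv_of_eq (by simp))
  apply EqvGen.trans _ ([] ++ [c1, b1] ++ List.replicate k a) _
    (.rel _ _ ⟨[], List.replicate k a, [c, b], [c1, b1], hcb, rfl, rfl⟩)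
  apply EqvGen.trans _ ([c1] ++ ([b1] ++ List.replicate k a) ++ []) _ (eqv_of_eq (by simp))
  apply EqvGen.trans _ ([c1] ++ (List.replicate k a ++ [b1]) ++ []) _
    (eqv_ctx [c1] [] (move b1 (by simp [RKK]) k))
  exact eqv_of_eq (by simp)

lemma part2 (c b d : K) (hcb : ([c, b], [c1, b1]) ∈ RKK) (hb : ([b, a], [a, b]) ∈ RKK)
    (hbd : ([b, d], [b1, d1]) ∈ RKK) (k l : ℕ) :
    EqvGen (Step RKK)
      ([c1] ++ List.replicate k a ++ [b1] ++ List.replicate l a ++ [d])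
      ([c] ++ List.replicate (k + l) a ++ [b1, d1]) := by
  apply EqvGen.trans _
    (([c1] ++ List.replicate k a) ++ ([b1] ++ List.replicate l a) ++ [d]) _
    (eqv_of_eq (by simp))
  apply EqvGen.trans _
    (([c1] ++ List.replicate k a) ++ (List.replicate l a ++ [b1]) ++ [d]) _
    (eqv_ctx ([c1] ++ List.replicate k a) [d] (move b1 (by simp [RKK]) l))
  apply EqvGen.trans _ ([] ++ ([c1] ++ List.replicate (k + l) a ++ [b1]) ++ [d]) _
    (eqv_of_eq (by simp; rw [List.replicate_add, List.append_assoc]))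
  apply EqvGen.trans _ ([] ++ ([c] ++ List.replicate (k + l) a ++ [b]) ++ [d]) _
    (eqv_ctx [] [d] (.symm _ _ (part1 c b hcb hb (k + l))))
  apply EqvGen.trans _ (([c] ++ List.replicate (k + l) a) ++ [b1, d1] ++ []) _
    (.rel _ _ ⟨[c] ++ List.replicate (k + l) a, [], [b, d], [b1, d1], hbd, by simp, rfl⟩)
  exact eqv_of_eq (by simp)

end Aux

/-- For j ∈ {2,3} and all k, ℓ ≥ 0:
(i) `c_j aᵏ b_j ↔*_R c₁ aᵏ b₁`, and
(ii) `c₁ aᵏ b₁ aˡ d_j ↔*_R c_j a^{k+ℓ} b₁ d₁`. -/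
theorem stmt_4 :
    ∀ k l : ℕ,
      (Relation.EqvGen (Step RKK)
        ([c2] ++ List.replicate k a ++ [b2]) ([c1] ++ List.replicate k a ++ [b1]) ∧
       Relation.EqvGen (Step RKK)
        ([c3] ++ List.replicate k a ++ [b3]) ([c1] ++ List.replicate k a ++ [b1])) ∧
      (Relation.EqvGen (Step RKK)
        ([c1] ++ List.replicate k a ++ [b1] ++ List.replicate l a ++ [d2])
        ([c2] ++ List.replicate (k + l) a ++ [b1, d1]) ∧
       Relation.EqvGen (Step RKK)
        ([c1] ++ List.replicate k a ++ [b1] ++ List.replicate l a ++ [d3])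
        ([c3] ++ List.replicate (k + l) a ++ [b1, d1])) := by
  intro k l
  exact ⟨⟨part1 c2 b2 (by simp [RKK]) (by simp [RKK]) k,
          part1 c3 b3 (by simp [RKK]) (by simp [RKK]) k⟩,
         part2 c2 b2 d2 (by simp [RKK]) (by simp [RKK]) (by simp [RKK]) k l,
         part2 c3 b3 d3 (by simp [RKK]) (by simp [RKK]) (by simp [RKK]) k l⟩
end

section
/- Let A = {a, b₁, b₂, b₃, c₁, c₂, c₃, d₁, d₂, d₃} and let S be the (infinite) rewriting system with rules bᵢa → abᵢ (i ∈ {1,2,3}), c_j aᵏ b_j → c₁ aᵏ b₁ (j ∈ {2,3}, k ≥ 0), c₁ aᵏ b₁ aˡ d_j → c_j a^{k+ℓ} b₁ d₁ (j ∈ {2,3}, k,ℓ ≥ 0), and b_j d_j → b₁d₁ (j ∈ {2,3}). Then S is terminating: there is no infinite sequence u₀ →_S u₁ →_S u₂ →_S ⋯ of words over A. -/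
open K

/-- The infinite rewriting system `S` with rules `bᵢa → abᵢ` (i ∈ {1,2,3}),
`c_j aᵏ b_j → c₁ aᵏ b₁` (j ∈ {2,3}, k ≥ 0),
`c₁ aᵏ b₁ aˡ d_j → c_j a^{k+ℓ} b₁ d₁` (j ∈ {2,3}, k,ℓ ≥ 0), and
`b_j d_j → b₁ d₁` (j ∈ {2,3}). -/
def SKK : Set (List K × List K) :=
  {p | p = ([b1,a], [a,b1]) ∨ p = ([b2,a], [a,b2]) ∨ p = ([b3,a], [a,b3]) ∨
    (∃ k : ℕ, p = ([c2] ++ List.replicate k a ++ [b2],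
                   [c1] ++ List.replicate k a ++ [b1])) ∨
    (∃ k : ℕ, p = ([c3] ++ List.replicate k a ++ [b3],
                   [c1] ++ List.replicate k a ++ [b1])) ∨
    (∃ k l : ℕ, p = ([c1] ++ List.replicate k a ++ [b1] ++ List.replicate l a ++ [d2],
                     [c2] ++ List.replicate (k + l) a ++ [b1, d1])) ∨
    (∃ k l : ℕ, p = ([c1] ++ List.replicate k a ++ [b1] ++ List.replicate l a ++ [d3],
                     [c3] ++ List.replicate (k + l) a ++ [b1, d1])) ∨
    p = ([b2,d2], [b1,d1]) ∨ p = ([b3,d3], [b1,d1])}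

deriving instance DecidableEq for K

/-- letter weights -/
def wK : K → ℕ
  | K.a => 0 | K.b1 => 0 | K.b2 => 2 | K.b3 => 2
  | K.c1 => 1 | K.c2 => 0 | K.c3 => 0
  | K.d1 => 0 | K.d2 => 2 | K.d3 => 2

def isB : K → ℕ
  | K.b1 => 1 | K.b2 => 1 | K.b3 => 1 | _ => 0

def Wt (u : List K) : ℕ := (u.map wK).sum
def Bn (u : List K) : ℕ := (u.map isB).sum
def cA (u : List K) : ℕ := u.count a

/-- number of (b, later a) inversions -/
def Nv : List K → ℕ
  | [] => 0
  | x :: t => isB x * cA t + Nv t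

@[simp] lemma Wt_nil : Wt [] = 0 := rfl
@[simp] lemma Wt_cons (x : K) (u : List K) : Wt (x :: u) = wK x + Wt u := rfl
@[simp] lemma Wt_append (u v : List K) : Wt (u ++ v) = Wt u + Wt v := by
  simp [Wt]
@[simp] lemma Bn_nil : Bn [] = 0 := rfl
@[simp] lemma Bn_cons (x : K) (u : List K) : Bn (x :: u) = isB x + Bn u := rfl
@[simp] lemma Bn_append (u v : List K) : Bn (u ++ v) = Bn u + Bn v := by
  simp [Bn]
@[simp] lemma cA_nil : cA [] = 0 := rfl
@[simp] lemma cA_cons (x : K) (u : List K) : cA (x :: u) = (if x = a then 1 else 0) + cA u := by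
  simp [cA, List.count_cons]
  split <;> omega
@[simp] lemma cA_append (u v : List K) : cA (u ++ v) = cA u + cA v := by
  simp [cA, List.count_append]
@[simp] lemma Nv_nil : Nv [] = 0 := rfl
@[simp] lemma Nv_cons (x : K) (u : List K) : Nv (x :: u) = isB x * cA u + Nv u := rfl
@[simp] lemma Nv_append (u v : List K) : Nv (u ++ v) = Nv u + Bn u * cA v + Nv v := by
  induction u with
  | nil => simp
  | cons x t ih => simp [ih]; ring

@[simp] lemma Wt_rep (k : ℕ) : Wt (List.replicate k a) = 0 := by
  induction k with
  | zero => rfl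
  | succ n ih => simp [List.replicate_succ, ih, wK]
@[simp] lemma Bn_rep (k : ℕ) : Bn (List.replicate k a) = 0 := by
  induction k with
  | zero => rfl
  | succ n ih => simp [List.replicate_succ, ih, isB]
@[simp] lemma cA_rep (k : ℕ) : cA (List.replicate k a) = k := by
  induction k with
  | zero => rfl
  | succ n ih => simp [List.replicate_succ, ih]; omega
@[simp] lemma Nv_rep (k : ℕ) : Nv (List.replicate k a) = 0 := by
  induction k with
  | zero => rfl
  | succ n ih => simp [List.replicate_succ, ih, isB]

lemma key_s5 {u v : List K} (h : Step SKK u v) :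
    Wt v < Wt u ∨ (Wt v = Wt u ∧ Nv v < Nv u) := by
  obtain ⟨x, y, l, r, hr, hu, hv⟩ := h
  subst hu hv
  rcases hr with h|h|h|⟨k,h⟩|⟨k,h⟩|⟨k,l',h⟩|⟨k,l',h⟩|h|h <;>
    injection h with h1 h2 <;> subst h1 h2 <;>
    simp [wK, isB] <;>
    omega

lemma no_desc (p q : ℕ → ℕ)
    (h : ∀ n, p (n+1) < p n ∨ (p (n+1) = p n ∧ q (n+1) < q n)) : False := by
  have main : ∀ A : ℕ, ∀ B : ℕ, ∀ p q : ℕ → ℕ, p 0 = A → q 0 = B →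
      (∀ n, p (n+1) < p n ∨ (p (n+1) = p n ∧ q (n+1) < q n)) → False := by
    intro A
    induction A using Nat.strong_induction_on with
    | _ A ihA =>
      intro B
      induction B using Nat.strong_induction_on with
      | _ B ihB =>
        intro p q hp hq h
        rcases h 0 with h0 | ⟨h0, h0'⟩
        · exact ihA (p 1) (hp ▸ h0) (q 1) (fun n => p (n+1)) (fun n => q (n+1))
            rfl rfl (fun n => h (n+1))
        · exact ihB (q 1) (hq ▸ h0') (fun n => p (n+1)) (fun n => q (n+1))
            (h0.trans hp) rfl (fun n => h (n+1))
  exact main (p 0) (q 0) p q rfl rfl h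

/-- The system `S` is terminating: there is no infinite sequence
`u₀ →_S u₁ →_S u₂ →_S ⋯`. -/
theorem stmt_5 : ¬ ∃ f : ℕ → List K, ∀ n : ℕ, Step SKK (f n) (f (n + 1)) := by
  rintro ⟨f, hf⟩
  exact no_desc (fun n => Wt (f n)) (fun n => Nv (f n)) (fun n => key_s5 (hf n))
end

section
/- Let A = {a, b₁, b₂, b₃, c₁, c₂, c₃, d₁, d₂, d₃} and let S be the (infinite) rewriting system with rules bᵢa → abᵢ (i ∈ {1,2,3}), c_j aᵏ b_j → c₁ aᵏ b₁ (j ∈ {2,3}, k ≥ 0), c₁ aᵏ b₁ aˡ d_j → c_j a^{k+ℓ} b₁ d₁ (j ∈ {2,3}, k,ℓ ≥ 0), and b_j d_j → b₁d₁ (j ∈ {2,3}). Then S is confluent: whenever u →*_S v and u →*_S w there exists z with v →*_S z and w →*_S z. Moreover the Thue congruence ↔*_S coincides with the Thue congruence ↔*_R of the finite system R = {bᵢa → abᵢ (i ∈ {1,2,3}), c_j b_j → c₁b₁ (j ∈ {2,3}), b_j d_j → b₁d₁ (j ∈ {2,3})}. -/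
open K

section Kit
variable {α : Type*} {R : Set (List α × List α)}

theorem step_of (x y : List α) {l r : List α} (h : (l, r) ∈ R) :
    Step R (x ++ l ++ y) (x ++ r ++ y) := ⟨x, y, l, r, h, rfl, rfl⟩

theorem step_of' {u v x y l r : List α} (h : (l, r) ∈ R)
    (hu : u = x ++ l ++ y) (hv : v = x ++ r ++ y) : Step R u v := ⟨x, y, l, r, h, hu, hv⟩

theorem Step.context {u v : List α} (x y : List α) (h : Step R u v) :
    Step R (x ++ u ++ y) (x ++ v ++ y) := by
  obtain ⟨x', y', l, r, hm, rfl, rfl⟩ := h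
  exact step_of' hm (x := x ++ x') (y := y' ++ y) (by simp) (by simp)

theorem RT.context {u v : List α} (x y : List α)
    (h : Relation.ReflTransGen (Step R) u v) :
    Relation.ReflTransGen (Step R) (x ++ u ++ y) (x ++ v ++ y) := by
  induction h with
  | refl => exact .refl
  | tail _ h2 ih => exact ih.tail (h2.context x y)

theorem RT.toEqv {u v : List α} (h : Relation.ReflTransGen (Step R) u v) :
    Relation.EqvGen (Step R) u v := by
  induction h with
  | refl => exact .refl _
  | tail _ h2 ih => exact ih.trans _ _ _ (.rel _ _ h2)

theorem append_split {x₁ x₂ t₁ t₂ : List α} (h : x₁ ++ t₁ = x₂ ++ t₂)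
    (hle : x₁.length ≤ x₂.length) : ∃ m, x₂ = x₁ ++ m ∧ t₁ = m ++ t₂ := by
  refine ⟨x₂.drop x₁.length, ?_, ?_⟩
  · have h1 : x₁ = x₂.take x₁.length := by
      have := congrArg (List.take x₁.length) h
      rwa [List.take_left, List.take_append_of_le_length hle] at this
    conv_lhs => rw [← List.take_append_drop x₁.length x₂, ← h1]
  · have := congrArg (List.drop x₁.length) h
    rwa [List.drop_left, List.drop_append_of_le_length hle] at this

theorem cons_split {m o t : List α} {x : α} (h : m ++ o = x :: t) :
    (m = [] ∧ o = x :: t) ∨ ∃ m', m = x :: m' ∧ m' ++ o = t := by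
  cases m with
  | nil => exact Or.inl ⟨rfl, h⟩
  | cons e m' =>
    simp only [List.cons_append, List.cons.injEq] at h
    exact Or.inr ⟨m', by simp [h.1], h.2⟩

theorem rep_split {m o t : List α} {k : ℕ} {x : α}
    (h : m ++ o = List.replicate k x ++ t) :
    (∃ k₁ k₂, k = k₁ + k₂ ∧ m = List.replicate k₁ x ∧ o = List.replicate k₂ x ++ t) ∨
    (∃ m', m = List.replicate k x ++ m' ∧ m' ++ o = t) := by
  rcases le_or_gt m.length k with hle | hlt
  · left
    obtain ⟨m₂, hm₂, ho⟩ := append_split h (by simpa using hle)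
    refine ⟨m.length, k - m.length, by omega, ?_, ?_⟩
    · have := congrArg (List.take m.length) hm₂
      rw [List.take_replicate, List.take_left, min_eq_left hle] at this
      exact this.symm
    · have := congrArg (List.drop m.length) hm₂
      rw [List.drop_replicate, List.drop_left] at this
      rw [ho, this]
  · right
    obtain ⟨m', hm', ht⟩ := append_split h.symm (by simpa using hlt.le)
    exact ⟨m', hm', ht.symm⟩

theorem rep_cancel {k k' : ℕ} {z x x' : α} {y y' : List α} (hx : x ≠ z) (hx' : x' ≠ z)
    (h : List.replicate k z ++ x :: y = List.replicate k' z ++ x' :: y') :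
    k = k' ∧ x = x' ∧ y = y' := by
  induction k generalizing k' with
  | zero =>
    cases k' with
    | zero => simpa using h
    | succ n => simp [List.replicate_succ] at h; exact absurd h.1 hx
  | succ n ih =>
    cases k' with
    | zero => simp [List.replicate_succ] at h; exact absurd h.1.symm hx'
    | succ n' =>
      simp only [List.replicate_succ, List.cons_append, List.cons.injEq] at h
      obtain ⟨h1, h2, h3⟩ := ih h.2
      exact ⟨by omega, h2, h3⟩

end Kit

def IsB (β : K) : Prop := β = b1 ∨ β = b2 ∨ β = b3
def Pair2 (c' b' : K) : Prop := (c' = c2 ∧ b' = b2) ∨ (c' = c3 ∧ b' = b3)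
def Pair3 (c' d' : K) : Prop := (c' = c2 ∧ d' = d2) ∨ (c' = c3 ∧ d' = d3)
def Pair4 (b' d' : K) : Prop := (b' = b2 ∧ d' = d2) ∨ (b' = b3 ∧ d' = d3)

theorem mem1 {β : K} (h : IsB β) : ([β, a], [a, β]) ∈ SKK := by
  rcases h with rfl | rfl | rfl <;> simp [SKK]

theorem mem2 {c' b' : K} (k : ℕ) (h : Pair2 c' b') :
    (c' :: (List.replicate k a ++ [b']), c1 :: (List.replicate k a ++ [b1])) ∈ SKK := by
  rcases h with ⟨rfl, rfl⟩ | ⟨rfl, rfl⟩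
  · exact Or.inr (Or.inr (Or.inr (Or.inl ⟨k, by simp⟩)))
  · exact Or.inr (Or.inr (Or.inr (Or.inr (Or.inl ⟨k, by simp⟩))))

theorem mem3 {c' d' : K} (k l : ℕ) (h : Pair3 c' d') :
    (c1 :: (List.replicate k a ++ b1 :: (List.replicate l a ++ [d'])),
     c' :: (List.replicate (k + l) a ++ [b1, d1])) ∈ SKK := by
  rcases h with ⟨rfl, rfl⟩ | ⟨rfl, rfl⟩
  · exact Or.inr (Or.inr (Or.inr (Or.inr (Or.inr (Or.inl ⟨k, l, by simp⟩)))))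
  · exact Or.inr (Or.inr (Or.inr (Or.inr (Or.inr (Or.inr (Or.inl ⟨k, l, by simp⟩))))))

theorem mem4 {b' d' : K} (h : Pair4 b' d') : ([b', d'], [b1, d1]) ∈ SKK := by
  rcases h with ⟨rfl, rfl⟩ | ⟨rfl, rfl⟩ <;> simp [SKK]

theorem SKK_cases {l r : List K} (h : (l, r) ∈ SKK) :
    (∃ β, IsB β ∧ l = [β, a] ∧ r = [a, β]) ∨
    (∃ c' b' k, Pair2 c' b' ∧ l = c' :: (List.replicate k a ++ [b']) ∧
      r = c1 :: (List.replicate k a ++ [b1])) ∨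
    (∃ c' d' k l', Pair3 c' d' ∧
      l = c1 :: (List.replicate k a ++ b1 :: (List.replicate l' a ++ [d'])) ∧
      r = c' :: (List.replicate (k + l') a ++ [b1, d1])) ∨
    (∃ β d', Pair4 β d' ∧ l = [β, d'] ∧ r = [b1, d1]) := by
  rcases h with h | h | h | ⟨k, h⟩ | ⟨k, h⟩ | ⟨k, l', h⟩ | ⟨k, l', h⟩ | h | h <;>
    rw [Prod.ext_iff] at h <;> obtain ⟨rfl, rfl⟩ := h
  · exact Or.inl ⟨b1, Or.inl rfl, rfl, rfl⟩
  · exact Or.inl ⟨b2, Or.inr (Or.inl rfl), rfl, rfl⟩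
  · exact Or.inl ⟨b3, Or.inr (Or.inr rfl), rfl, rfl⟩
  · exact Or.inr (Or.inl ⟨c2, b2, k, Or.inl ⟨rfl, rfl⟩, by simp, by simp⟩)
  · exact Or.inr (Or.inl ⟨c3, b3, k, Or.inr ⟨rfl, rfl⟩, by simp, by simp⟩)
  · exact Or.inr (Or.inr (Or.inl ⟨c2, d2, k, l', Or.inl ⟨rfl, rfl⟩, by simp, by simp⟩))
  · exact Or.inr (Or.inr (Or.inl ⟨c3, d3, k, l', Or.inr ⟨rfl, rfl⟩, by simp, by simp⟩))
  · exact Or.inr (Or.inr (Or.inr ⟨b2, d2, Or.inl ⟨rfl, rfl⟩, rfl, rfl⟩))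
  · exact Or.inr (Or.inr (Or.inr ⟨b3, d3, Or.inr ⟨rfl, rfl⟩, rfl, rfl⟩))

theorem memR1 {β : K} (h : IsB β) : ([β, a], [a, β]) ∈ RKK := by
  rcases h with rfl | rfl | rfl <;> simp [RKK]

theorem memR2 {c' b' : K} (h : Pair2 c' b') : ([c', b'], [c1, b1]) ∈ RKK := by
  rcases h with ⟨rfl, rfl⟩ | ⟨rfl, rfl⟩ <;> simp [RKK]

theorem memR4 {b' d' : K} (h : Pair4 b' d') : ([b', d'], [b1, d1]) ∈ RKK := by
  rcases h with ⟨rfl, rfl⟩ | ⟨rfl, rfl⟩ <;> simp [RKK]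

theorem RT.cons {R : Set (List K × List K)} {u v : List K} (e : K)
    (h : Relation.ReflTransGen (Step R) u v) :
    Relation.ReflTransGen (Step R) (e :: u) (e :: v) := by
  simpa using RT.context [e] [] h

theorem pair2_isB {c' b' : K} (h : Pair2 c' b') : IsB b' := by
  rcases h with ⟨rfl, rfl⟩ | ⟨rfl, rfl⟩ <;> simp [IsB]

theorem pair3_split {c' d' : K} (h : Pair3 c' d') : ∃ b', Pair2 c' b' ∧ Pair4 b' d' := by
  rcases h with ⟨rfl, rfl⟩ | ⟨rfl, rfl⟩
  · exact ⟨b2, Or.inl ⟨rfl, rfl⟩, Or.inl ⟨rfl, rfl⟩⟩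
  · exact ⟨b3, Or.inr ⟨rfl, rfl⟩, Or.inr ⟨rfl, rfl⟩⟩

theorem moveb {β : K} (hβ : IsB β) (k : ℕ) (t : List K) :
    Relation.ReflTransGen (Step RKK) (β :: (List.replicate k a ++ t))
      (List.replicate k a ++ β :: t) := by
  induction k generalizing t with
  | zero => exact .refl
  | succ n ih =>
    have h1 : Step RKK (β :: (List.replicate (n+1) a ++ t))
        (a :: (β :: (List.replicate n a ++ t))) :=
      step_of' (memR1 hβ) (x := []) (y := List.replicate n a ++ t)
        (by simp [List.replicate_succ]) (by simp)
    exact Relation.ReflTransGen.head h1 (RT.cons a (ih t))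

theorem S_rule_eqv {l r : List K} (h : (l, r) ∈ SKK) : Relation.EqvGen (Step RKK) l r := by
  rcases SKK_cases h with ⟨β, hβ, rfl, rfl⟩ | ⟨c', b', k, hp, rfl, rfl⟩ |
    ⟨c', d', k, l', hp, rfl, rfl⟩ | ⟨β, d', hp, rfl, rfl⟩
  · exact .rel _ _ (step_of' (memR1 hβ) (x := []) (y := []) (by simp) (by simp))
  · -- c' (a^k) b'  ⟵*  c' b' a^k  ⟶  c1 b1 a^k ⟶* c1 a^k b1
    have hb := pair2_isB hp
    have rt1 : Relation.ReflTransGen (Step RKK) (c' :: b' :: List.replicate k a)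
        (c' :: (List.replicate k a ++ [b'])) := by
      simpa using RT.cons c' (moveb hb k [])
    have st : Step RKK (c' :: b' :: List.replicate k a) (c1 :: b1 :: List.replicate k a) :=
      step_of' (memR2 hp) (x := []) (y := List.replicate k a) (by simp) (by simp)
    have rt2 : Relation.ReflTransGen (Step RKK) (c1 :: b1 :: List.replicate k a)
        (c1 :: (List.replicate k a ++ [b1])) := by
      simpa using RT.cons c1 (moveb (Or.inl rfl) k [])
    exact (((RT.toEqv rt1)).symm _ _).trans _ _ _ ((Relation.EqvGen.rel _ _ st).trans _ _ _ (RT.toEqv rt2))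
  · -- l = c1 a^k b1 a^l' d',  r = c' a^(k+l') [b1,d1], mid = c' b' a^(k+l') d'
    obtain ⟨b', hp2, hp4⟩ := pair3_split hp
    have hb := pair2_isB hp2
    have st1 : Step RKK (c' :: b' :: (List.replicate (k + l') a ++ [d']))
        (c1 :: b1 :: (List.replicate (k + l') a ++ [d'])) :=
      step_of' (memR2 hp2) (x := []) (y := List.replicate (k + l') a ++ [d'])
        (by simp) (by simp)
    have rt1 : Relation.ReflTransGen (Step RKK)
        (c1 :: b1 :: (List.replicate (k + l') a ++ [d']))
        (c1 :: (List.replicate k a ++ b1 :: (List.replicate l' a ++ [d']))) := by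
      have h := RT.cons c1 (moveb (Or.inl rfl) k (List.replicate l' a ++ [d']))
      rw [List.replicate_add, List.append_assoc]
      exact h
    have rt2 : Relation.ReflTransGen (Step RKK)
        (c' :: b' :: (List.replicate (k + l') a ++ [d']))
        (c' :: (List.replicate (k + l') a ++ b' :: [d'])) :=
      RT.cons c' (moveb hb (k + l') [d'])
    have st2 : Step RKK (c' :: (List.replicate (k + l') a ++ b' :: [d']))
        (c' :: (List.replicate (k + l') a ++ [b1, d1])) :=
      step_of' (memR4 hp4) (x := c' :: List.replicate (k + l') a) (y := [])
        (by simp) (by simp)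
    have e1 : Relation.EqvGen (Step RKK)
        (c' :: b' :: (List.replicate (k + l') a ++ [d']))
        (c1 :: (List.replicate k a ++ b1 :: (List.replicate l' a ++ [d']))) :=
      (Relation.EqvGen.rel _ _ st1).trans _ _ _ (RT.toEqv rt1)
    have e2 : Relation.EqvGen (Step RKK)
        (c' :: b' :: (List.replicate (k + l') a ++ [d']))
        (c' :: (List.replicate (k + l') a ++ [b1, d1])) :=
      (RT.toEqv rt2).trans _ _ _ (.rel _ _ st2)
    exact (e1.symm _ _).trans _ _ _ e2
  · exact .rel _ _ (step_of' (memR4 hp) (x := []) (y := []) (by simp) (by simp))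

theorem Eqv.context {R : Set (List K × List K)} {u v : List K} (x y : List K)
    (h : Relation.EqvGen (Step R) u v) :
    Relation.EqvGen (Step R) (x ++ u ++ y) (x ++ v ++ y) := by
  induction h with
  | rel _ _ h => exact .rel _ _ (h.context x y)
  | refl => exact .refl _
  | symm _ _ _ ih => exact ih.symm _ _
  | trans _ _ _ _ _ ih1 ih2 => exact ih1.trans _ _ _ ih2

theorem RKK_sub_SKK {l r : List K} (h : (l, r) ∈ RKK) : (l, r) ∈ SKK := by
  rcases h with h | h | h | h | h | h | h <;> simp only [Set.mem_singleton_iff, Prod.ext_iff] at h <;>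
    obtain ⟨rfl, rfl⟩ := h
  · exact mem1 (Or.inl rfl)
  · exact mem1 (Or.inr (Or.inl rfl))
  · exact mem1 (Or.inr (Or.inr rfl))
  · simpa using mem2 0 (Or.inl ⟨rfl, rfl⟩)
  · simpa using mem2 0 (Or.inr ⟨rfl, rfl⟩)
  · exact mem4 (Or.inl ⟨rfl, rfl⟩)
  · exact mem4 (Or.inr ⟨rfl, rfl⟩)

theorem eqv_iff (u v : List K) :
    Relation.EqvGen (Step SKK) u v ↔ Relation.EqvGen (Step RKK) u v := by
  constructor
  · intro h
    induction h with
    | rel _ _ h =>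
      obtain ⟨x, y, l, r, hm, rfl, rfl⟩ := h
      exact Eqv.context x y (S_rule_eqv hm)
    | refl => exact .refl _
    | symm _ _ _ ih => exact ih.symm _ _
    | trans _ _ _ _ _ ih1 ih2 => exact ih1.trans _ _ _ ih2
  · intro h
    induction h with
    | rel _ _ h =>
      obtain ⟨x, y, l, r, hm, rfl, rfl⟩ := h
      exact .rel _ _ (step_of x y (RKK_sub_SKK hm))
    | refl => exact .refl _
    | symm _ _ _ ih => exact ih.symm _ _
    | trans _ _ _ _ _ ih1 ih2 => exact ih1.trans _ _ _ ih2

open Relation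

theorem refl_of_eq {R : Set (List K × List K)} {u v : List K} (h : u = v) :
    Relation.ReflGen (Step R) u v := h ▸ Relation.ReflGen.refl

theorem lhs_head {l r : List K} (h : (l, r) ∈ SKK) :
    ∃ e t, l = e :: t ∧ (IsB e ∨ e = c2 ∨ e = c3 ∨ e = c1) := by
  rcases SKK_cases h with ⟨β, hβ, rfl, rfl⟩ | ⟨c', b', k, hp, rfl, rfl⟩ |
    ⟨c', d', k, l', hp, rfl, rfl⟩ | ⟨β, d', hp, rfl, rfl⟩
  · exact ⟨β, _, rfl, Or.inl hβ⟩
  · rcases hp with ⟨rfl, rfl⟩ | ⟨rfl, rfl⟩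
    · exact ⟨c2, _, rfl, Or.inr (Or.inl rfl)⟩
    · exact ⟨c3, _, rfl, Or.inr (Or.inr (Or.inl rfl))⟩
  · exact ⟨c1, _, rfl, Or.inr (Or.inr (Or.inr rfl))⟩
  · rcases hp with ⟨rfl, rfl⟩ | ⟨rfl, rfl⟩
    · exact ⟨b2, _, rfl, Or.inl (Or.inr (Or.inl rfl))⟩
    · exact ⟨b3, _, rfl, Or.inl (Or.inr (Or.inr rfl))⟩

theorem no_head_a {l r t y₂ : List K} (h : (l, r) ∈ SKK) (ho : l ++ y₂ = a :: t) :
    False := by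
  obtain ⟨e, t', rfl, he⟩ := lhs_head h
  simp only [List.cons_append, List.cons.injEq] at ho
  obtain ⟨rfl, -⟩ := ho
  rcases he with hb | h' | h' | h'
  · simp [IsB] at hb
  all_goals simp at h'

theorem no_head_d {l r t y₂ : List K} {d' : K} (h : (l, r) ∈ SKK)
    (hd : d' = d1 ∨ d' = d2 ∨ d' = d3) (ho : l ++ y₂ = d' :: t) : False := by
  obtain ⟨e, t', rfl, he⟩ := lhs_head h
  simp only [List.cons_append, List.cons.injEq] at ho
  obtain ⟨rfl, -⟩ := ho
  rcases hd with rfl | rfl | rfl <;>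
    · rcases he with hb | h' | h' | h'
      · simp [IsB] at hb
      all_goals simp at h'

theorem pair2_b_ne_a {c' b' : K} (h : Pair2 c' b') : b' ≠ a := by
  rcases h with ⟨rfl, rfl⟩ | ⟨rfl, rfl⟩ <;> simp

theorem pair3_d_ne_a {c' d' : K} (h : Pair3 c' d') : d' ≠ a := by
  rcases h with ⟨rfl, rfl⟩ | ⟨rfl, rfl⟩ <;> simp

theorem pair2_pair4 {c' b' d' : K} (h2 : Pair2 c' b') (h4 : Pair4 b' d') :
    Pair3 c' d' := by
  rcases h2 with ⟨rfl, rfl⟩ | ⟨rfl, rfl⟩ <;> rcases h4 with ⟨h, rfl⟩ | ⟨h, rfl⟩ <;>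
    simp_all [Pair3]

/-- Critical pair i : overlap of `c' aᵏ b'` with `b' a`. -/
theorem cp_i {v w x₁ y₂ : List K} {c' b' : K} (hp : Pair2 c' b') (k : ℕ)
    (hv : v = x₁ ++ (c1 :: (List.replicate k a ++ [b1])) ++ a :: y₂)
    (hw : w = x₁ ++ (c' :: (List.replicate (k+1) a ++ [b'])) ++ y₂) :
    ∃ z, Relation.ReflGen (Step SKK) v z ∧ Relation.ReflGen (Step SKK) w z := by
  refine ⟨x₁ ++ (c1 :: (List.replicate (k+1) a ++ [b1])) ++ y₂, ?_, ?_⟩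
  · exact .single (step_of' (mem1 (Or.inl rfl))
      (x := x₁ ++ (c1 :: List.replicate k a)) (y := y₂)
      (by simp [hv]) (by simp [List.replicate_succ']))
  · exact .single (step_of' (mem2 (k+1) hp) (x := x₁) (y := y₂) hw rfl)

/-- Critical pair ii : overlap of `c' aᵏ b'` with `b' d'`. -/
theorem cp_ii {v w x₁ y₂ : List K} {c' b' d' : K} (hp2 : Pair2 c' b') (hp4 : Pair4 b' d')
    (k : ℕ)
    (hv : v = x₁ ++ (c1 :: (List.replicate k a ++ [b1])) ++ d' :: y₂)
    (hw : w = x₁ ++ (c' :: (List.replicate k a ++ [b1, d1])) ++ y₂) :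
    ∃ z, Relation.ReflGen (Step SKK) v z ∧ Relation.ReflGen (Step SKK) w z := by
  refine ⟨x₁ ++ (c' :: (List.replicate (k+0) a ++ [b1, d1])) ++ y₂, ?_, ?_⟩
  · exact .single (step_of' (mem3 k 0 (pair2_pair4 hp2 hp4)) (x := x₁) (y := y₂)
      (by simp [hv]) rfl)
  · exact refl_of_eq (by simp [hw])

/-- Critical pair iii : `b1 a` inside `c1 aᵏ b1 aⁿ⁺¹ d'`. -/
theorem cp_iii {v w x₁ y₁ : List K} {c' d' : K} (hp : Pair3 c' d') (k n : ℕ)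
    (hv : v = x₁ ++ (c' :: (List.replicate (k + (n+1)) a ++ [b1, d1])) ++ y₁)
    (hw : w = x₁ ++ (c1 :: (List.replicate (k+1) a ++
      b1 :: (List.replicate n a ++ [d']))) ++ y₁) :
    ∃ z, Relation.ReflGen (Step SKK) v z ∧ Relation.ReflGen (Step SKK) w z := by
  refine ⟨x₁ ++ (c' :: (List.replicate (k + 1 + n) a ++ [b1, d1])) ++ y₁, ?_, ?_⟩
  · exact refl_of_eq (by rw [hv, show k + (n+1) = k + 1 + n by omega])
  · exact .single (step_of' (mem3 (k+1) n hp) (x := x₁) (y := y₁) hw rfl)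

/-- Overlap analysis when the overlap `o` of the two redexes is `b' ‧ y₁`
with `Pair2 c' b'` coming from the first rule. -/
theorem overlap2 {v w x₁ y₁ y₂ l₂ r₂ : List K} {c' b' : K} (hp : Pair2 c' b') (k : ℕ)
    (h₂ : (l₂, r₂) ∈ SKK) (ho : l₂ ++ y₂ = b' :: y₁)
    (hv : v = x₁ ++ (c1 :: (List.replicate k a ++ [b1])) ++ y₁)
    (hw : w = (x₁ ++ (c' :: List.replicate k a)) ++ r₂ ++ y₂) :
    ∃ z, Relation.ReflGen (Step SKK) v z ∧ Relation.ReflGen (Step SKK) w z := by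
  rcases SKK_cases h₂ with ⟨β, hβ, rfl, rfl⟩ | ⟨c'', b'', k', hq, rfl, rfl⟩ |
    ⟨c'', d'', k', l'', hq, rfl, rfl⟩ | ⟨β, d'', hq, rfl, rfl⟩
  · -- l₂ = [β, a] : critical pair i
    simp only [List.cons_append, List.cons.injEq] at ho
    obtain ⟨rfl, ho⟩ := ho
    subst ho
    exact cp_i (x₁ := x₁) (y₂ := y₂) hp k (by simp [hv]) (by simp [hw, List.replicate_succ'])
  · -- l₂ starts with c'' ∈ {c2, c3} : impossible
    simp only [List.cons_append, List.cons.injEq] at ho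
    rcases hq with ⟨rfl, rfl⟩ | ⟨rfl, rfl⟩ <;> rcases hp with ⟨rfl, rfl⟩ | ⟨rfl, rfl⟩ <;>
      simp_all
  · -- l₂ starts with c1 : impossible
    simp only [List.cons_append, List.cons.injEq] at ho
    rcases hp with ⟨rfl, rfl⟩ | ⟨rfl, rfl⟩ <;> simp_all
  · -- l₂ = [β, d''] : critical pair ii
    simp only [List.cons_append, List.cons.injEq] at ho
    obtain ⟨rfl, ho⟩ := ho
    subst ho
    exact cp_ii (x₁ := x₁) (y₂ := y₂) hp hq k (by simp [hv]) (by simp [hw])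

/-- Overlap analysis when the overlap `o` is `b1 aˡ' d' ‧ y₁` inside rule 3. -/
theorem overlap3 {v w x₁ y₁ y₂ l₂ r₂ : List K} {c' d' : K} (hp : Pair3 c' d')
    (k l' : ℕ) (h₂ : (l₂, r₂) ∈ SKK)
    (ho : l₂ ++ y₂ = b1 :: (List.replicate l' a ++ d' :: y₁))
    (hv : v = x₁ ++ (c' :: (List.replicate (k + l') a ++ [b1, d1])) ++ y₁)
    (hw : w = (x₁ ++ (c1 :: List.replicate k a)) ++ r₂ ++ y₂) :
    ∃ z, Relation.ReflGen (Step SKK) v z ∧ Relation.ReflGen (Step SKK) w z := by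
  rcases SKK_cases h₂ with ⟨β, hβ, rfl, rfl⟩ | ⟨c'', b'', k', hq, rfl, rfl⟩ |
    ⟨c'', d'', k', l'', hq, rfl, rfl⟩ | ⟨β, d'', hq, rfl, rfl⟩
  · -- l₂ = [β, a] with β = b1 : critical pair iii (needs l' ≥ 1)
    simp only [List.cons_append, List.cons.injEq] at ho
    obtain ⟨rfl, ho⟩ := ho
    cases l' with
    | zero =>
      simp only [List.replicate, List.nil_append, List.cons.injEq] at ho
      exact absurd ho.1.symm (pair3_d_ne_a hp)
    | succ n =>
      rw [List.replicate_succ, List.cons_append, List.cons.injEq] at ho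
      obtain ⟨-, ho⟩ := ho
      subst ho
      exact cp_iii (x₁ := x₁) (y₁ := y₁) hp k n (by simp [hv]) (by simp [hw, List.replicate_succ'])
  · -- head c'' ∈ {c2,c3} ≠ b1
    simp only [List.cons_append, List.cons.injEq] at ho
    rcases hq with ⟨rfl, rfl⟩ | ⟨rfl, rfl⟩ <;> simp_all
  · -- head c1 ≠ b1
    simp only [List.cons_append, List.cons.injEq] at ho
    simp_all
  · -- l₂ = [β, d''] with β ∈ {b2,b3} ≠ b1
    simp only [List.cons_append, List.cons.injEq] at ho
    rcases hq with ⟨rfl, rfl⟩ | ⟨rfl, rfl⟩ <;> simp_all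

theorem pair3_c_inj {x y d' : K} (h1 : Pair3 x d') (h2 : Pair3 y d') : x = y := by
  rcases h1 with ⟨rfl, rfl⟩ | ⟨rfl, rfl⟩ <;> rcases h2 with ⟨rfl, h⟩ | ⟨rfl, h⟩ <;> simp_all

theorem pair3_d_mem {c' d' : K} (h : Pair3 c' d') : d' = d1 ∨ d' = d2 ∨ d' = d3 := by
  rcases h with ⟨-, rfl⟩ | ⟨-, rfl⟩ <;> simp

theorem pair4_d_mem {b' d' : K} (h : Pair4 b' d') : d' = d1 ∨ d' = d2 ∨ d' = d3 := by
  rcases h with ⟨-, rfl⟩ | ⟨-, rfl⟩ <;> simp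

theorem locconf_le {x₁ y₁ l₁ r₁ x₂ y₂ l₂ r₂ : List K}
    (h₁ : (l₁, r₁) ∈ SKK) (h₂ : (l₂, r₂) ∈ SKK)
    (he : x₁ ++ l₁ ++ y₁ = x₂ ++ l₂ ++ y₂) (hle : x₁.length ≤ x₂.length) :
    ∃ z, Relation.ReflGen (Step SKK) (x₁ ++ r₁ ++ y₁) z ∧
      Relation.ReflGen (Step SKK) (x₂ ++ r₂ ++ y₂) z := by
  rw [List.append_assoc x₁, List.append_assoc x₂] at he
  obtain ⟨m, rfl, he2⟩ := append_split he hle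
  rcases le_or_gt l₁.length m.length with hd | hov
  · -- disjoint redexes
    obtain ⟨m', rfl, hy⟩ := append_split he2 hd
    subst hy
    refine ⟨x₁ ++ r₁ ++ (m' ++ (r₂ ++ y₂)), ?_, ?_⟩
    · exact .single (step_of' h₂ (x := x₁ ++ r₁ ++ m') (y := y₂) (by simp) (by simp))
    · exact .single (step_of' h₁ (x := x₁) (y := m' ++ (r₂ ++ y₂)) (by simp) (by simp))
  · -- overlapping redexes
    obtain ⟨o, hl, ho⟩ := append_split he2.symm hov.le
    have o_ne : o ≠ [] := by rintro rfl; rw [hl] at hov; simp at hov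
    rcases SKK_cases h₁ with ⟨β, hβ, rfl, rfl⟩ | ⟨c', b', k, hp, rfl, rfl⟩ |
      ⟨c', d', k, l', hp, rfl, rfl⟩ | ⟨β, d', hp, rfl, rfl⟩
    · -- l₁ = [β, a]
      rcases cons_split hl.symm with ⟨rfl, rfl⟩ | ⟨m₁, rfl, hm1⟩
      · -- o = [β, a]
        rcases SKK_cases h₂ with ⟨β', hβ', rfl, rfl⟩ | ⟨c'', b'', k', hq, rfl, rfl⟩ |
          ⟨c'', d'', k', l'', hq, rfl, rfl⟩ | ⟨β', d'', hq, rfl, rfl⟩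
        · simp only [List.cons_append, List.nil_append, List.cons.injEq] at ho
          obtain ⟨rfl, -, rfl⟩ := ho
          exact ⟨_, .refl, refl_of_eq (by simp)⟩
        · simp only [List.cons_append, List.nil_append, List.cons.injEq] at ho
          rcases hq with ⟨rfl, rfl⟩ | ⟨rfl, rfl⟩ <;> rcases hβ with rfl | rfl | rfl <;>
            exact absurd ho.1 (by simp)
        · simp only [List.cons_append, List.nil_append, List.cons.injEq] at ho
          rcases hβ with rfl | rfl | rfl <;> exact absurd ho.1 (by simp)
        · simp only [List.cons_append, List.nil_append, List.cons.injEq] at ho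
          rcases hq with ⟨rfl, rfl⟩ | ⟨rfl, rfl⟩ <;> exact absurd ho.2.1 (by simp)
      · rcases cons_split hm1 with ⟨rfl, rfl⟩ | ⟨m₂, rfl, hm2⟩
        · exact (no_head_a h₂ (by simpa using ho)).elim
        · obtain ⟨-, rfl⟩ := List.append_eq_nil_iff.mp hm2
          exact (o_ne rfl).elim
    · -- l₁ = c' (aᵏ) b'
      rcases cons_split hl.symm with ⟨rfl, rfl⟩ | ⟨m₁, rfl, hm1⟩
      · -- o is the whole of l₁
        rcases SKK_cases h₂ with ⟨β', hβ', rfl, rfl⟩ | ⟨c'', b'', k', hq, rfl, rfl⟩ |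
          ⟨c'', d'', k', l'', hq, rfl, rfl⟩ | ⟨β', d'', hq, rfl, rfl⟩
        · simp only [List.cons_append, List.nil_append, List.cons.injEq] at ho
          rcases hβ' with rfl | rfl | rfl <;> rcases hp with ⟨rfl, rfl⟩ | ⟨rfl, rfl⟩ <;>
            exact absurd ho.1 (by simp)
        · simp only [List.cons_append, List.nil_append, List.append_assoc,
            List.singleton_append, List.cons.injEq] at ho
          obtain ⟨rfl, ho⟩ := ho
          obtain ⟨rfl, rfl, rfl⟩ := rep_cancel (pair2_b_ne_a hq) (pair2_b_ne_a hp) ho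
          exact ⟨_, .refl, refl_of_eq (by simp)⟩
        · simp only [List.cons_append, List.nil_append, List.cons.injEq] at ho
          rcases hp with ⟨rfl, rfl⟩ | ⟨rfl, rfl⟩ <;> exact absurd ho.1 (by simp)
        · simp only [List.cons_append, List.nil_append, List.cons.injEq] at ho
          rcases hq with ⟨rfl, rfl⟩ | ⟨rfl, rfl⟩ <;> rcases hp with ⟨rfl, rfl⟩ | ⟨rfl, rfl⟩ <;>
            exact absurd ho.1 (by simp)
      · rcases rep_split hm1 with ⟨k₁, k₂, hk, rfl, rfl⟩ | ⟨m₂, rfl, hm2⟩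
        · cases k₂ with
          | zero =>
            exact overlap2 (x₁ := x₁) (y₁ := y₁) (y₂ := y₂) hp k h₂
              (by simpa using ho) (by simp) (by simp [hk])
          | succ n =>
            rw [List.replicate_succ] at ho
            simp only [List.cons_append, List.append_assoc] at ho
            exact (no_head_a h₂ ho).elim
        · rcases cons_split hm2 with ⟨rfl, rfl⟩ | ⟨m₃, rfl, hm3⟩
          · exact overlap2 (x₁ := x₁) (y₁ := y₁) (y₂ := y₂) hp k h₂
              (by simpa using ho) (by simp) (by simp)
          · obtain ⟨-, rfl⟩ := List.append_eq_nil_iff.mp hm3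
            exact (o_ne rfl).elim
    · -- l₁ = c1 (aᵏ) b1 (aˡ') d'
      rcases cons_split hl.symm with ⟨rfl, rfl⟩ | ⟨m₁, rfl, hm1⟩
      · -- o is the whole of l₁
        rcases SKK_cases h₂ with ⟨β', hβ', rfl, rfl⟩ | ⟨c'', b'', k', hq, rfl, rfl⟩ |
          ⟨c'', d'', k', l'', hq, rfl, rfl⟩ | ⟨β', d'', hq, rfl, rfl⟩
        · simp only [List.cons_append, List.nil_append, List.cons.injEq] at ho
          rcases hβ' with rfl | rfl | rfl <;> exact absurd ho.1 (by simp)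
        · simp only [List.cons_append, List.nil_append, List.cons.injEq] at ho
          rcases hq with ⟨rfl, rfl⟩ | ⟨rfl, rfl⟩ <;> exact absurd ho.1 (by simp)
        · simp only [List.cons_append, List.nil_append, List.append_assoc,
            List.singleton_append, List.cons.injEq] at ho
          obtain ⟨-, ho⟩ := ho
          obtain ⟨rfl, -, ho2⟩ := rep_cancel (show (b1 : K) ≠ a by simp)
            (show (b1 : K) ≠ a by simp) ho
          obtain ⟨rfl, rfl, rfl⟩ := rep_cancel (pair3_d_ne_a hq) (pair3_d_ne_a hp) ho2
          obtain rfl := pair3_c_inj hq hp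
          exact ⟨_, .refl, refl_of_eq (by simp)⟩
        · simp only [List.cons_append, List.nil_append, List.cons.injEq] at ho
          rcases hq with ⟨rfl, rfl⟩ | ⟨rfl, rfl⟩ <;> exact absurd ho.1 (by simp)
      · rcases rep_split hm1 with ⟨k₁, k₂, hk, rfl, rfl⟩ | ⟨m₂, rfl, hm2⟩
        · cases k₂ with
          | zero =>
            exact overlap3 (x₁ := x₁) (y₁ := y₁) (y₂ := y₂) hp k l' h₂
              (by simpa using ho) (by simp) (by simp [hk])
          | succ n =>
            rw [List.replicate_succ] at ho
            simp only [List.cons_append, List.append_assoc] at ho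
            exact (no_head_a h₂ ho).elim
        · rcases cons_split hm2 with ⟨rfl, rfl⟩ | ⟨m₃, rfl, hm3⟩
          · exact overlap3 (x₁ := x₁) (y₁ := y₁) (y₂ := y₂) hp k l' h₂
              (by simpa using ho) (by simp) (by simp)
          · rcases rep_split hm3 with ⟨l₁', l₂', hk', rfl, rfl⟩ | ⟨m₄, rfl, hm4⟩
            · cases l₂' with
              | zero =>
                exact (no_head_d h₂ (pair3_d_mem hp) (by simpa using ho)).elim
              | succ n =>
                rw [List.replicate_succ] at ho
                simp only [List.cons_append, List.append_assoc] at ho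
                exact (no_head_a h₂ ho).elim
            · rcases cons_split hm4 with ⟨rfl, rfl⟩ | ⟨m₅, rfl, hm5⟩
              · exact (no_head_d h₂ (pair3_d_mem hp) (by simpa using ho)).elim
              · obtain ⟨-, rfl⟩ := List.append_eq_nil_iff.mp hm5
                exact (o_ne rfl).elim
    · -- l₁ = [β, d']
      rcases cons_split hl.symm with ⟨rfl, rfl⟩ | ⟨m₁, rfl, hm1⟩
      · rcases SKK_cases h₂ with ⟨β', hβ', rfl, rfl⟩ | ⟨c'', b'', k', hq, rfl, rfl⟩ |
          ⟨c'', d'', k', l'', hq, rfl, rfl⟩ | ⟨β', d'', hq, rfl, rfl⟩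
        · simp only [List.cons_append, List.nil_append, List.cons.injEq] at ho
          rcases hp with ⟨rfl, rfl⟩ | ⟨rfl, rfl⟩ <;> exact absurd ho.2.1 (by simp)
        · simp only [List.cons_append, List.nil_append, List.cons.injEq] at ho
          rcases hq with ⟨rfl, rfl⟩ | ⟨rfl, rfl⟩ <;> rcases hp with ⟨rfl, rfl⟩ | ⟨rfl, rfl⟩ <;>
            exact absurd ho.1 (by simp)
        · simp only [List.cons_append, List.nil_append, List.cons.injEq] at ho
          rcases hp with ⟨rfl, rfl⟩ | ⟨rfl, rfl⟩ <;> exact absurd ho.1 (by simp)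
        · simp only [List.cons_append, List.nil_append, List.cons.injEq] at ho
          have hbb : β' = β := ho.1
          subst hbb
          obtain rfl : d'' = d' := by
            rcases hq with ⟨h1, rfl⟩ | ⟨h1, rfl⟩ <;> rcases hp with ⟨h2, rfl⟩ | ⟨h2, rfl⟩ <;>
              simp_all
          obtain ⟨-, -, rfl⟩ := ho
          exact ⟨_, .refl, refl_of_eq (by simp)⟩
      · rcases cons_split hm1 with ⟨rfl, rfl⟩ | ⟨m₂, rfl, hm2⟩
        · exact (no_head_d h₂ (pair4_d_mem hp) (by simpa using ho)).elim
        · obtain ⟨-, rfl⟩ := List.append_eq_nil_iff.mp hm2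
          exact (o_ne rfl).elim

theorem locconf {u v w : List K} (h1 : Step SKK u v) (h2 : Step SKK u w) :
    ∃ z, Relation.ReflGen (Step SKK) v z ∧ Relation.ReflGen (Step SKK) w z := by
  obtain ⟨x₁, y₁, l₁, r₁, hm1, rfl, rfl⟩ := h1
  obtain ⟨x₂, y₂, l₂, r₂, hm2, he, rfl⟩ := h2
  rcases le_total x₁.length x₂.length with hle | hle
  · exact locconf_le hm1 hm2 he hle
  · obtain ⟨z, hz1, hz2⟩ := locconf_le hm2 hm1 he.symm hle
    exact ⟨z, hz2, hz1⟩


/-- The system `S` is confluent, and its Thue congruence coincides with the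
Thue congruence of the finite system `R`. -/
theorem stmt_6 :
    (∀ u v w : List K, Relation.ReflTransGen (Step SKK) u v →
      Relation.ReflTransGen (Step SKK) u w →
      ∃ z : List K, Relation.ReflTransGen (Step SKK) v z ∧
        Relation.ReflTransGen (Step SKK) w z) ∧
    (∀ u v : List K,
      Relation.EqvGen (Step SKK) u v ↔ Relation.EqvGen (Step RKK) u v) := by
  refine ⟨fun u v w h1 h2 => ?_, eqv_iff⟩
  exact Relation.church_rosser
    (fun p q s hpq hps => by
      obtain ⟨z, hz1, hz2⟩ := locconf hpq hps
      exact ⟨z, hz1, hz2.to_reflTransGen⟩) h1 h2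
end

section
/- Let A = {a,b,c} and R = {ac → ca, bc → cb, cab → cbb}. Then for every word u over {a,b}, one has c u a b ↔*_R c u b b. Consequently, with R' = {(c u a b, c u b b) : u ∈ {a,b}*}, the Thue congruence ↔*_{R ∪ R'} equals the Thue congruence ↔*_R. -/
open ABC

/-- The rules `ac → ca`, `bc → cb`, `cab → cbb` of Example 3.4. -/
def Rp : Set (List ABC × List ABC) :=
  {([a,c], [c,a]), ([b,c], [c,b]), ([c,a,b], [c,b,b])}

/-- The extra rules `cuab → cubb` for `u ∈ {a,b}*`. -/
def Rp' : Set (List ABC × List ABC) :=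
  {p | ∃ u : List ABC, c ∉ u ∧ p = (c :: u ++ [a, b], c :: u ++ [b, b])}

/-! Both `ac → ca` and `bc → cb` let `c` travel leftwards through any word over `{a, b}`, so
`cuab` and `cubb` are congruent to `u·cab` and `u·cbb`, which differ by the rule `cab → cbb`
applied in the context `u·_`. Hence each rule of `R'` is already in the congruence of `R`,
and adding such rules leaves the congruence unchanged. -/

open Relation

namespace Step

variable {α : Type*} {R S : Set (List α × List α)} {u v : List α}

theorem of_mem {l r : List α} (h : (l, r) ∈ R) : Step R l r :=
  ⟨[], [], l, r, h, by simp, by simp⟩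

theorem mono (hRS : R ⊆ S) (h : Step R u v) : Step S u v :=
  let ⟨x, y, l, r, hlr, hu, hv⟩ := h
  ⟨x, y, l, r, hRS hlr, hu, hv⟩

theorem append_context (p q : List α) (h : Step R u v) : Step R (p ++ u ++ q) (p ++ v ++ q) :=
  let ⟨x, y, l, r, hlr, hu, hv⟩ := h
  ⟨p ++ x, y ++ q, l, r, hlr, by simp [hu], by simp [hv]⟩

end Step

section ThueCongruence

variable {α : Type*} {R S : Set (List α × List α)} {u v : List α}

theorem eqvGen_step_append_context (p q : List α) (h : EqvGen (Step R) u v) :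
    EqvGen (Step R) (p ++ u ++ q) (p ++ v ++ q) := by
  induction h with
  | rel x y hxy => exact .rel _ _ (hxy.append_context p q)
  | refl x => exact .refl _
  | symm x y _ ih => exact ih.symm
  | trans x y z _ _ ihxy ihyz => exact ihxy.trans _ _ _ ihyz

theorem eqvGen_step_union_iff (hS : ∀ p ∈ S, EqvGen (Step R) p.1 p.2) :
    EqvGen (Step (R ∪ S)) u v ↔ EqvGen (Step R) u v := by
  refine ⟨fun h => EqvGen.eqvGen_le (r' := EqvGen (Step R)) ?_ _ _ h,
    EqvGen.mono (fun _ _ => Step.mono Set.subset_union_left) u v⟩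
  rintro _ _ ⟨x, y, l, r, hlr | hlr, rfl, rfl⟩
  · exact .rel _ _ ⟨x, y, l, r, hlr, rfl, rfl⟩
  · exact eqvGen_step_append_context x y (hS _ hlr)

end ThueCongruence

theorem step_Rp_swap_c {d : ABC} (hd : d ≠ c) : Step Rp [d, c] [c, d] :=
  Step.of_mem <| by cases d <;> simp_all [Rp]

theorem eqvGen_step_Rp_c_cons {d : ABC} (hd : d ≠ c) {x y : List ABC}
    (h : EqvGen (Step Rp) (c :: x) (c :: y)) :
    EqvGen (Step Rp) (c :: d :: x) (c :: d :: y) :=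
  have swap (z : List ABC) : EqvGen (Step Rp) (d :: c :: z) (c :: d :: z) :=
    .rel _ _ (by simpa using (step_Rp_swap_c hd).append_context [] z)
  have shifted : EqvGen (Step Rp) (d :: c :: x) (d :: c :: y) := by
    simpa using eqvGen_step_append_context [d] [] h
  (swap x).symm.trans _ _ _ (shifted.trans _ _ _ (swap y))

theorem eqvGen_step_Rp_c_ab_c_bb {u : List ABC} (hu : c ∉ u) :
    EqvGen (Step Rp) (c :: u ++ [a, b]) (c :: u ++ [b, b]) := by
  induction u with
  | nil => exact .rel _ _ (Step.of_mem (by simp [Rp]))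
  | cons d u ih =>
    rw [List.mem_cons, not_or] at hu
    exact eqvGen_step_Rp_c_cons (Ne.symm hu.1) (ih hu.2)

/-- For every word `u` over `{a,b}` one has `cuab ↔*_R cubb`; consequently
the Thue congruence of `R ∪ R'` equals that of `R`. -/
theorem stmt_7 :
    (∀ u : List ABC, c ∉ u →
      Relation.EqvGen (Step Rp) (c :: u ++ [a, b]) (c :: u ++ [b, b])) ∧
    (∀ v w : List ABC,
      Relation.EqvGen (Step (Rp ∪ Rp')) v w ↔ Relation.EqvGen (Step Rp) v w) := by
  refine ⟨fun u hu => eqvGen_step_Rp_c_ab_c_bb hu, fun v w => eqvGen_step_union_iff ?_⟩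
  rintro _ ⟨u, hu, rfl⟩
  exact eqvGen_step_Rp_c_ab_c_bb hu
end

section
/- Let A = {a,b,c}, R = {ac → ca, bc → cb, cab → cbb}, and R' = {c u a b → c u b b : u ∈ {a,b}*}. Then the (infinite) rewriting system (A, R ∪ R') is complete: it is terminating (there is no infinite sequence u₀ → u₁ → u₂ → ⋯ of single-step reductions) and confluent (whenever u →* v and u →* w there exists z with v →* z and w →* z). -/
open ABC

/-!
Termination: give `a` weight 2, `b` weight 1, `c` weight 0, and multiply the weight of each
letter by `2 ^ (number of c's to its right)`. Moving a `c` left halves the weight of the letter it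
passes, and `cuab → cubb` lowers the weight of one letter from 2 to 1 in the same place.

Confluence: every rule preserves the length, the number of `c`s and the number of `a`s with no
`b` to their right. If there is a `c`, these three numbers determine a word `cⁿ bᵐ aʲ` to which the
word reduces (first push the `c`s to the front, then turn into `b` every `a` that a `b` follows);
a word without `c` is irreducible. This gives every word a reduct that is invariant under steps.
-/

deriving instance DecidableEq for ABC

open List Relation

section StringRewriting

variable {α : Type*} {R : Set (List α × List α)}

lemma Step.of_mem_s8 {l r : List α} (h : (l, r) ∈ R) (x y : List α) :
    Step R (x ++ l ++ y) (x ++ r ++ y) :=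
  ⟨x, y, l, r, h, rfl, rfl⟩

lemma Step.append_left (z : List α) {u v : List α} (h : Step R u v) :
    Step R (z ++ u) (z ++ v) := by
  obtain ⟨x, y, l, r, hlr, rfl, rfl⟩ := h
  exact ⟨z ++ x, y, l, r, hlr, by simp, by simp⟩

lemma reflTransGen_step_append_left (z : List α) {u v : List α}
    (h : ReflTransGen (Step R) u v) : ReflTransGen (Step R) (z ++ u) (z ++ v) :=
  ReflTransGen.lift (z ++ ·) (fun _ _ ↦ Step.append_left z) _ _ h

lemma reflTransGen_step_cons (x : α) {u v : List α}
    (h : ReflTransGen (Step R) u v) : ReflTransGen (Step R) (x :: u) (x :: v) :=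
  reflTransGen_step_append_left [x] h

end StringRewriting

lemma Relation.ReflTransGen.apply_eq {α β : Type*} {r : α → α → Prop} {f : α → β}
    (hf : ∀ u v, r u v → f u = f v) {u v : α} (h : ReflTransGen r u v) : f u = f v := by
  induction h with
  | refl => rfl
  | tail _ hs ih => exact ih.trans (hf _ _ hs)

lemma exists_join_of_normalForm {α : Type*} {r : α → α → Prop} (N : α → α)
    (hred : ∀ u, ReflTransGen r u (N u)) (hinv : ∀ u v, r u v → N u = N v) {u v w : α}
    (huv : ReflTransGen r u v) (huw : ReflTransGen r u w) :
    ∃ z, ReflTransGen r v z ∧ ReflTransGen r w z :=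
  ⟨N u, huv.apply_eq hinv ▸ hred v, huw.apply_eq hinv ▸ hred w⟩

local infix:50 " ⟶* " => ReflTransGen (Step (Rp ∪ Rp'))

lemma cases_of_mem_rules {l r : List ABC} (h : (l, r) ∈ Rp ∪ Rp') :
    (l = [a, c] ∧ r = [c, a]) ∨ (l = [b, c] ∧ r = [c, b]) ∨
      ∃ w, c ∉ w ∧ l = c :: w ++ [a, b] ∧ r = c :: w ++ [b, b] := by
  rcases h with h | ⟨w, hw, h⟩
  · simp only [Rp, Set.mem_insert_iff, Set.mem_singleton_iff, Prod.mk.injEq] at h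
    rcases h with h | h | h
    · exact .inl h
    · exact .inr (.inl h)
    · exact .inr (.inr ⟨[], by simp, h⟩)
  · simp only [Prod.mk.injEq] at h
    exact .inr (.inr ⟨w, hw, h⟩)

/-- The number of `a`s with no `b` to their right. -/
def lateA : List ABC → ℕ
  | [] => 0
  | x :: t => (if x = a ∧ b ∉ t then 1 else 0) + lateA t

lemma lateA_append (u v : List ABC) :
    lateA (u ++ v) = (if b ∈ v then 0 else lateA u) + lateA v := by
  induction u with
  | nil => simp [lateA]
  | cons x t ih =>
    simp only [cons_append, lateA, ih, mem_append]
    split_ifs <;> simp_all [add_assoc]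

lemma lateA_replicate (n : ℕ) (x : ABC) :
    lateA (replicate n x) = if x = a then n else 0 := by
  induction n with
  | zero => simp [lateA]
  | succ n ih => cases x <;> simp_all [replicate_succ, lateA, add_comm]

lemma invariants_of_mem_rules {l r : List ABC} (h : (l, r) ∈ Rp ∪ Rp') :
    c ∈ l ∧ l.length = r.length ∧ l.count c = r.count c ∧ lateA l = lateA r ∧
      (b ∈ l ↔ b ∈ r) := by
  rcases cases_of_mem_rules h with ⟨rfl, rfl⟩ | ⟨rfl, rfl⟩ | ⟨w, hw, rfl, rfl⟩
  · simp [lateA]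
  · simp [lateA]
  · simp [lateA_append, lateA]

def letterWeight : ABC → ℕ
  | a => 2
  | b => 1
  | c => 0

def weight : List ABC → ℕ
  | [] => 0
  | x :: t => letterWeight x * 2 ^ t.count c + weight t

lemma weight_append (u v : List ABC) :
    weight (u ++ v) = weight u * 2 ^ v.count c + weight v := by
  induction u with
  | nil => simp [weight]
  | cons x t ih => simp only [cons_append, weight, ih, count_append, pow_add]; ring

lemma weight_lt_of_mem_rules {l r : List ABC} (h : (l, r) ∈ Rp ∪ Rp') :
    weight r < weight l := by
  rcases cases_of_mem_rules h with ⟨rfl, rfl⟩ | ⟨rfl, rfl⟩ | ⟨w, hw, rfl, rfl⟩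
  · simp [weight, letterWeight]
  · simp [weight, letterWeight]
  · simp [weight_append, count_eq_zero_of_not_mem hw, weight, letterWeight]

lemma weight_lt_of_step {u v : List ABC} (h : Step (Rp ∪ Rp') u v) : weight v < weight u := by
  obtain ⟨x, y, l, r, hlr, rfl, rfl⟩ := h
  simp only [weight_append, (invariants_of_mem_rules hlr).2.2.1]
  gcongr
  exact weight_lt_of_mem_rules hlr

def normalForm (u : List ABC) : List ABC :=
  if u.count c = 0 then u
  else replicate (u.count c) c ++ replicate (u.length - u.count c - lateA u) b ++
    replicate (lateA u) a

lemma normalForm_eq_of_step {u v : List ABC} (h : Step (Rp ∪ Rp') u v) :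
    normalForm u = normalForm v := by
  obtain ⟨x, y, l, r, hlr, rfl, rfl⟩ := h
  obtain ⟨hc, hlen, hcount, hlateA, hb⟩ := invariants_of_mem_rules hlr
  have hlateA' : lateA (x ++ l ++ y) = lateA (x ++ r ++ y) := by
    simp only [append_assoc, lateA_append, mem_append, hlateA, hb]
  have hpos : (x ++ l ++ y).count c ≠ 0 := (count_pos_iff.2 (by simp [hc])).ne'
  have hcount' : (x ++ l ++ y).count c = (x ++ r ++ y).count c := by simp [hcount]
  have hlen' : (x ++ l ++ y).length = (x ++ r ++ y).length := by simp [hlen]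
  rw [normalForm, normalForm, if_neg hpos, ← hcount', if_neg hpos, hlen', hlateA']

lemma normalForm_replicate (k m j : ℕ) :
    normalForm (replicate (k + 1) c ++ replicate m b ++ replicate j a) =
      replicate (k + 1) c ++ replicate m b ++ replicate j a := by
  simp [normalForm, lateA_append, lateA_replicate, count_replicate]

lemma swap_mem_rules {x : ABC} (hx : x ≠ c) : ([x, c], [c, x]) ∈ Rp ∪ Rp' := by
  cases x <;> simp_all [Rp]

lemma ab_mem_rules {w : List ABC} (hw : c ∉ w) :
    (c :: w ++ [a, b], c :: w ++ [b, b]) ∈ Rp ∪ Rp' :=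
  .inr ⟨w, hw, rfl⟩

lemma cons_replicate_c_reduces {x : ABC} (hx : x ≠ c) (n : ℕ) (s : List ABC) :
    x :: (replicate n c ++ s) ⟶* replicate n c ++ x :: s := by
  induction n with
  | zero => rfl
  | succ n ih =>
    have hswap := Step.of_mem_s8 (swap_mem_rules hx) [] (replicate n c ++ s)
    exact .head (by simpa [replicate_succ] using hswap) (reflTransGen_step_cons c ih)

lemma reduces_replicate_count_c (u : List ABC) :
    u ⟶* replicate (u.count c) c ++ u.filter (· ≠ c) := by
  induction u with
  | nil => rfl
  | cons x t ih =>
    refine (reflTransGen_step_cons x ih).trans ?_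
    by_cases hx : x = c
    · subst hx; simp [replicate_succ, ReflTransGen.refl]
    · simpa [hx] using cons_replicate_c_reduces hx _ _

lemma exists_reduces_replicate_b_replicate_a {p : List ABC} (hp : c ∉ p) :
    ∃ m j, ∀ w, c ∉ w → c :: w ++ p ⟶* c :: w ++ (replicate m b ++ replicate j a) := by
  induction p with
  | nil => exact ⟨0, 0, fun _ _ ↦ by simpa using ReflTransGen.refl⟩
  | cons x t ih =>
    obtain ⟨m, j, ht⟩ := ih (by simp_all)
    have hxt : ∀ w, c ∉ w →
        c :: w ++ x :: t ⟶* c :: w ++ x :: (replicate m b ++ replicate j a) := fun w hw ↦ by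
      simpa using ht (w ++ [x]) (by simp_all)
    match x, m with
    | c, _ => simp at hp
    | b, m => exact ⟨m + 1, j, by simpa [replicate_succ] using hxt⟩
    | a, 0 => exact ⟨0, j + 1, by simpa [replicate_succ] using hxt⟩
    | a, m + 1 =>
      refine ⟨m + 2, j, fun w hw ↦ (hxt w hw).tail ?_⟩
      simpa [replicate_succ] using Step.of_mem_s8 (ab_mem_rules hw) [] (replicate m b ++ replicate j a)

lemma reduces_normalForm (u : List ABC) : u ⟶* normalForm u := by
  by_cases hu : u.count c = 0
  · simp only [normalForm, hu, if_true]; rfl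
  obtain ⟨k, hk⟩ : ∃ k, u.count c = k + 1 := Nat.exists_eq_succ_of_ne_zero hu
  obtain ⟨m, j, hsort⟩ :=
    exists_reduces_replicate_b_replicate_a (p := u.filter (· ≠ c)) (by simp)
  have hred : u ⟶* replicate (k + 1) c ++ replicate m b ++ replicate j a := by
    refine (reduces_replicate_count_c u).trans ?_
    simpa [hk, replicate_succ'] using
      reflTransGen_step_append_left (replicate k c) (hsort [] (by simp))
  rwa [hred.apply_eq (f := normalForm) fun _ _ ↦ normalForm_eq_of_step, normalForm_replicate]

/-- The infinite rewriting system `R ∪ R'` is complete: terminating and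
confluent. -/
theorem stmt_8 :
    (¬ ∃ f : ℕ → List ABC, ∀ n : ℕ, Step (Rp ∪ Rp') (f n) (f (n + 1))) ∧
    (∀ u v w : List ABC, Relation.ReflTransGen (Step (Rp ∪ Rp')) u v →
      Relation.ReflTransGen (Step (Rp ∪ Rp')) u w →
      ∃ z : List ABC, Relation.ReflTransGen (Step (Rp ∪ Rp')) v z ∧
        Relation.ReflTransGen (Step (Rp ∪ Rp')) w z) := by
  refine ⟨?_, fun u v w ↦ exists_join_of_normalForm normalForm reduces_normalForm
    fun _ _ ↦ normalForm_eq_of_step⟩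
  rintro ⟨f, hf⟩
  exact not_strictAnti_of_wellFoundedLT (weight ∘ f)
    (strictAnti_nat_of_succ_lt fun n ↦ weight_lt_of_step (hf n))
end

section
/- Let A = {a,b,c}, R = {ac → ca, bc → cb, cab → cbb}, and R' = {c u a b → c u b b : u ∈ {a,b}*}. A word w over A is irreducible with respect to the rewriting system (A, R ∪ R') if and only if w ∈ {a,b}* ∪ {cⁱ bʲ aᵏ : i ≥ 1, j,k ≥ 0}, i.e., w either contains no letter c, or w consists of a nonempty block of c's followed by a (possibly empty) block of b's followed by a (possibly empty) block of a's. -/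
open ABC

/-!
A word is reducible iff some left-hand side occurs in it. Every left-hand side contains `c` and one
of the descending factors `ac`, `bc`, `ab` for the order `c < b < a`, so neither a `c`-free word nor
the sorted word `cⁱbʲaᵏ` is reducible. Conversely, in an irreducible word no `c` follows another
letter, so it is `cⁱt` with `t ∈ {a,b}*`; and when `i ≥ 1`, an `ab` in `t` would complete a
left-hand side `cuab`, so `t = bʲaᵏ`.
-/

theorem exists_step_iff {α : Type*} {R : Set (List α × List α)} {w : List α} :
    (∃ v, Step R w v) ↔ ∃ p ∈ R, p.1 <:+: w := by
  constructor
  · rintro ⟨v, x, y, l, r, hR, rfl, -⟩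
    exact ⟨(l, r), hR, x, y, rfl⟩
  · rintro ⟨⟨l, r⟩, hR, x, y, rfl⟩
    exact ⟨x ++ r ++ y, x, y, l, r, hR, rfl, rfl⟩

namespace List

variable {α : Type*}

theorem exists_eq_replicate_append_of_not_infix {x : α} {l : List α}
    (h : ∀ d, d ≠ x → ¬ [d, x] <:+: l) : ∃ i t, x ∉ t ∧ l = replicate i x ++ t := by
  induction l with
  | nil => exact ⟨0, [], not_mem_nil, rfl⟩
  | cons d l ih =>
    obtain ⟨i, t, hxt, rfl⟩ := ih fun e he hinf => h e he (hinf.trans (suffix_cons d l).isInfix)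
    by_cases hd : d = x
    · exact ⟨i + 1, t, hxt, by simp [hd, replicate_succ]⟩
    cases i with
    | zero => exact ⟨0, d :: t, by simp [hxt, Ne.symm hd], rfl⟩
    | succ i => exact absurd ⟨[], replicate i x ++ t, by simp [replicate_succ]⟩ (h d hd)

theorem exists_eq_replicate_append_replicate {x y : α} {l : List α}
    (hl : ∀ d ∈ l, d = x ∨ d = y) (h : ¬ [y, x] <:+: l) :
    ∃ j k, l = replicate j x ++ replicate k y := by
  induction l with
  | nil => exact ⟨0, 0, rfl⟩
  | cons d l ih =>
    obtain ⟨j, k, rfl⟩ := ih (fun e he => hl e (mem_cons_of_mem d he))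
      (fun hinf => h (hinf.trans (suffix_cons d l).isInfix))
    rcases hl d mem_cons_self with rfl | rfl
    · exact ⟨j + 1, k, by simp [replicate_succ]⟩
    cases j with
    | zero => exact ⟨0, k + 1, by simp [replicate_succ]⟩
    | succ j => exact absurd ⟨[], replicate j x ++ replicate k d, by simp [replicate_succ]⟩ h

end List

namespace ABC

def rank : ABC → ℕ
  | c => 0
  | b => 1
  | a => 2

theorem pairwise_rank_replicate (i j k : ℕ) :
    (List.replicate i c ++ List.replicate j b ++ List.replicate k a).Pairwise
      (rank · ≤ rank ·) := by
  simp [List.pairwise_append, List.pairwise_replicate, List.mem_replicate, rank]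

theorem c_mem_and_not_pairwise_rank_of_mem {p : List ABC × List ABC} (hp : p ∈ Rp ∪ Rp') :
    c ∈ p.1 ∧ ¬ p.1.Pairwise (rank · ≤ rank ·) := by
  rcases hp with hp | ⟨u, -, rfl⟩
  · simp only [Rp, Set.mem_insert_iff, Set.mem_singleton_iff] at hp
    rcases hp with rfl | rfl | rfl <;> simp [rank]
  · simp [List.pairwise_append, rank]

theorem exists_eq_replicate_of_not_infix {w : List ABC}
    (h : ¬ ∃ p ∈ Rp ∪ Rp', p.1 <:+: w) (hc : c ∈ w) :
    ∃ i j k : ℕ, 1 ≤ i ∧ w = List.replicate i c ++ List.replicate j b ++ List.replicate k a := by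
  have hdc : ∀ d, d ≠ c → ¬ [d, c] <:+: w := by
    rintro (_ | _ | _) hd hinf
    · exact h ⟨([a, c], [c, a]), Or.inl (by simp [Rp]), hinf⟩
    · exact h ⟨([b, c], [c, b]), Or.inl (by simp [Rp]), hinf⟩
    · exact hd rfl
  obtain ⟨i, t, hct, rfl⟩ := List.exists_eq_replicate_append_of_not_infix hdc
  obtain _ | i := i
  · exact (hct (by simpa using hc)).elim
  have hab : ¬ [a, b] <:+: t := by
    rintro ⟨x, y, rfl⟩
    have hcx : c ∉ x := fun hx => hct (by simp [hx])
    refine h ⟨_, Or.inr ⟨x, hcx, rfl⟩, List.replicate i c, y, ?_⟩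
    simp [List.replicate_succ']
  have hba : ∀ d ∈ t, d = b ∨ d = a := by
    rintro (_ | _ | _) hd
    exacts [Or.inr rfl, Or.inl rfl, absurd hd hct]
  obtain ⟨j, k, rfl⟩ := List.exists_eq_replicate_append_replicate hba hab
  exact ⟨i + 1, j, k, by omega, by simp⟩

end ABC

/-- A word over `{a,b,c}` is irreducible with respect to `R ∪ R'` if and only if
it lies in `{a,b}* ∪ {cⁱbʲaᵏ : i ≥ 1, j,k ≥ 0}`. -/
theorem stmt_9 :
    ∀ w : List ABC,
      (¬ ∃ v : List ABC, Step (Rp ∪ Rp') w v) ↔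
        (c ∉ w ∨ ∃ i j k : ℕ, 1 ≤ i ∧
          w = List.replicate i c ++ List.replicate j b ++ List.replicate k a) := by
  intro w
  rw [exists_step_iff]
  constructor
  · intro hw
    by_cases hc : c ∈ w
    · exact Or.inr (ABC.exists_eq_replicate_of_not_infix hw hc)
    · exact Or.inl hc
  · rintro hw ⟨p, hp, hinf⟩
    obtain ⟨hc, hsorted⟩ := ABC.c_mem_and_not_pairwise_rank_of_mem hp
    rcases hw with hcw | ⟨i, j, k, -, rfl⟩
    · exact hcw (hinf.subset hc)
    · exact hsorted ((ABC.pairwise_rank_replicate i j k).sublist hinf.sublist)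
end

section
/- Let F be the free monoid on the two-letter alphabet {a,b} and let ℤF denote the monoid ring of F over ℤ (the monoid algebra MonoidAlgebra ℤ F), viewed as a left module over itself. Then the left ℤF-submodule of ℤF generated by the set { u·(ab − bb)·v : u, v ∈ F } (where a word w ∈ F is identified with the corresponding element of ℤF, ab − bb denotes the difference of the elements corresponding to the words ab and bb, and multiplication is in ℤF) is NOT finitely generated as a left ℤF-module. -/
/-- The free monoid `F` on the two-letter alphabet `{a, b}`
(`a` is encoded as `false`, `b` as `true`). -/
abbrev F : Type := FreeMonoid Bool

/-- The letter `a`. -/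
def la : F := FreeMonoid.of false

/-- The letter `b`. -/
def lb : F := FreeMonoid.of true

/-- The monoid ring `ℤF`. -/
abbrev ZF : Type := MonoidAlgebra ℤ F

/-- The canonical image of a word `w ∈ F` in `ℤF`. -/
noncomputable def emb (w : F) : ZF := MonoidAlgebra.of ℤ F w

/-!
Let `M_N` be the left submodule generated by the `u(ab − bb)v` with `|v| ≤ N`. These form an
increasing chain exhausting the whole submodule, so if it were finitely generated it would
equal some `M_N`. Summing coefficients over the words of length `N + 3` that begin with `a`
gives a functional killing `p·x` for every `x ∈ M_N` and every `p`: the words `w·ab·v` and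
`w·bb·v` have the same length, and the same first letter unless `w = 1`, in which case they
are too short. It does not kill `ab·v − bb·v` with `|v| = N + 1`.
-/

open MonoidAlgebra Submodule

def AddMonoidHom.leftKer {R M : Type*} [Ring R] [AddCommGroup M] (ψ : R →+ M) :
    Submodule R R where
  carrier := {x | ∀ p, ψ (p * x) = 0}
  add_mem' hx hy p := by simp only [mul_add, map_add, hx p, hy p, add_zero]
  zero_mem' p := by simp only [mul_zero, map_zero]
  smul_mem' a x hx p := by simpa only [smul_eq_mul, mul_assoc] using hx (p * a)

lemma MonoidAlgebra.mem_leftKer_of_forall_of {k G M : Type*} [CommRing k] [Monoid G]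
    [AddCommGroup M] [Module k M] (ψ : MonoidAlgebra k G →ₗ[k] M) {x : MonoidAlgebra k G}
    (hx : ∀ g, ψ (of k G g * x) = 0) : x ∈ (ψ : MonoidAlgebra k G →+ M).leftKer := by
  intro p
  change ψ (p * x) = 0
  induction p using MonoidAlgebra.induction_on with
  | of g => exact hx g
  | add p q hp hq => rw [add_mul, map_add, hp, hq, add_zero]
  | smul r p hp => rw [smul_mul_assoc, map_smul, hp, smul_zero]

noncomputable def coeffSumOn (T : Set F) : ZF →ₗ[ℤ] ℤ :=
  (MonoidAlgebra.basis F ℤ).constr ℤ (T.indicator 1)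

lemma coeffSumOn_emb (T : Set F) (w : F) : coeffSumOn T (emb w) = T.indicator 1 w :=
  (MonoidAlgebra.basis F ℤ).constr_basis ℤ _ w

lemma coeffSumOn_emb_sub_emb (T : Set F) (w w' : F) :
    coeffSumOn T (emb w - emb w') = T.indicator 1 w - T.indicator 1 w' := by
  rw [map_sub, coeffSumOn_emb, coeffSumOn_emb]

lemma emb_mul (w u : F) : emb w * emb u = emb (w * u) :=
  (map_mul (of ℤ F) w u).symm

lemma emb_mul_relator_mul (u v : F) :
    emb u * (emb (la * lb) - emb (lb * lb)) * emb v =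
      emb (u * (la * lb) * v) - emb (u * (lb * lb) * v) := by
  rw [mul_sub, sub_mul, emb_mul, emb_mul, emb_mul, emb_mul]

lemma relator_mem_leftKer {T : Set F} {v : F}
    (hT : ∀ w, w * (la * lb) * v ∈ T ↔ w * (lb * lb) * v ∈ T) (u : F) :
    emb u * (emb (la * lb) - emb (lb * lb)) * emb v ∈ (coeffSumOn T : ZF →+ ℤ).leftKer := by
  refine mem_leftKer_of_forall_of _ fun g => ?_
  change coeffSumOn T (emb g * _) = 0
  rw [← mul_assoc, ← mul_assoc, emb_mul, emb_mul_relator_mul, coeffSumOn_emb_sub_emb,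
    sub_eq_zero]
  exact Set.indicator_eq_indicator (hT _) rfl

def longAWords (N : ℕ) : Set F := {w | w.length = N + 3 ∧ w.toList.head? = some false}

lemma FreeMonoid.head?_toList_mul {α : Type*} {w : FreeMonoid α} (hw : w ≠ 1)
    (x : FreeMonoid α) : (w * x).toList.head? = w.toList.head? := by
  rw [FreeMonoid.toList_mul,
    List.head?_append_of_ne_nil _ fun h => hw (FreeMonoid.toList.injective h)]

lemma mul_ab_mul_mem_longAWords_iff {N : ℕ} {v : F} (hv : v.length ≤ N) (w : F) :
    w * (la * lb) * v ∈ longAWords N ↔ w * (lb * lb) * v ∈ longAWords N := by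
  have hlen (x : F) (hx : x.length = 2) : (w * x * v).length = w.length + 2 + v.length := by
    rw [FreeMonoid.length_mul, FreeMonoid.length_mul, hx]
  rcases eq_or_ne w 1 with rfl | hw
  · refine iff_of_false (fun h => ?_) (fun h => ?_) <;>
    · have := h.1
      rw [hlen _ rfl, FreeMonoid.length_one] at this
      omega
  · simp only [longAWords, Set.mem_ofPred_eq, hlen (la * lb) rfl, hlen (lb * lb) rfl]
    rw [mul_assoc w, mul_assoc w, FreeMonoid.head?_toList_mul hw,
      FreeMonoid.head?_toList_mul hw]

lemma relator_notMem_leftKer {N : ℕ} {v : F} (hv : v.length = N + 1) :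
    emb 1 * (emb (la * lb) - emb (lb * lb)) * emb v ∉
      (coeffSumOn (longAWords N) : ZF →+ ℤ).leftKer := fun h => by
  have hab : la * lb * v ∈ longAWords N :=
    ⟨by rw [FreeMonoid.length_mul, hv, show (la * lb).length = 2 from rfl]; omega, rfl⟩
  have hbb : lb * lb * v ∉ longAWords N := fun h => nomatch h.2
  have := h 1
  rw [one_mul] at this
  change coeffSumOn _ _ = 0 at this
  rw [emb_mul_relator_mul, coeffSumOn_emb_sub_emb, one_mul, one_mul, Set.indicator_of_mem hab,
    Set.indicator_of_notMem hbb] at this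
  exact one_ne_zero this

def shortRelators (N : ℕ) : Set ZF :=
  {x | ∃ u v : F, v.length ≤ N ∧ x = emb u * (emb (la * lb) - emb (lb * lb)) * emb v}

lemma shortRelators_mono : Monotone shortRelators := by
  rintro m n hmn _ ⟨u, v, hv, rfl⟩
  exact ⟨u, v, hv.trans hmn, rfl⟩

lemma iUnion_shortRelators :
    ⋃ N, shortRelators N =
      {x : ZF | ∃ u v : F, x = emb u * (emb (la * lb) - emb (lb * lb)) * emb v} := by
  ext x
  simp only [Set.mem_iUnion, shortRelators, Set.mem_ofPred_eq]
  constructor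
  · rintro ⟨N, u, v, -, rfl⟩
    exact ⟨u, v, rfl⟩
  · rintro ⟨u, v, rfl⟩
    exact ⟨v.length, u, v, le_rfl, rfl⟩

lemma span_shortRelators_le_leftKer (N : ℕ) :
    span ZF (shortRelators N) ≤ (coeffSumOn (longAWords N) : ZF →+ ℤ).leftKer := by
  rw [span_le]
  rintro _ ⟨u, v, hv, rfl⟩
  exact relator_mem_leftKer (mul_ab_mul_mem_longAWords_iff hv) u

/-- The left `ℤF`-submodule of `ℤF` generated by
`{ u·(ab − bb)·v : u, v ∈ F }` is not finitely generated. -/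
theorem stmt_11 :
    ¬ (Submodule.span ZF
        {x : ZF | ∃ u v : F, x = emb u * (emb (la * lb) - emb (lb * lb)) * emb v}).FG := by
  intro hfg
  obtain ⟨N, hN⟩ := hfg.stabilizes_of_iSup_eq
    ⟨fun N => span ZF (shortRelators N), fun _ _ h => span_mono (shortRelators_mono h)⟩
    (by rw [← iUnion_shortRelators, span_iUnion]; rfl)
  obtain ⟨v, hv⟩ := FreeMonoid.length_surjective (α := Bool) (N + 1)
  have hmem : emb 1 * (emb (la * lb) - emb (lb * lb)) * emb v ∈ span ZF (shortRelators N) :=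
    hN.le (subset_span ⟨1, v, rfl⟩)
  exact relator_notMem_leftKer hv (span_shortRelators_le_leftKer N hmem)
end

section
/- Let A be a finite alphabet, let R be a homogeneous rewriting system on A (|ℓ| = |r| for every (ℓ,r) ∈ R), and let n be at least the maximum of |ℓ| over all rules (ℓ,r) ∈ R. Define R' = { (u ℓ v, u r v) : (ℓ,r) ∈ R, u,v ∈ A*, |u ℓ v| = n } (so every rule of R' has both sides of length exactly n). Then for all words u, v over A with |u| ≥ n: u ↔*_R v if and only if u ↔*_{R'} v. In particular, the map sending the ↔*_{R'}-class of a word u of length ≥ n to its ↔*_R-class is a well-defined bijection (indeed a semigroup isomorphism) between the ideal of elements of length ≥ n of the monoid presented by ⟨A | R'⟩ and the ideal of elements of length ≥ n of the monoid presented by ⟨A | R⟩. -/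
/-!
Every rule of `R' = paddedRules R n` is a rule of `R` in context, so `R'`-steps are
`R`-steps. Conversely an `R`-step `xℓy → xry` on a word of length `≥ n` is an `R'`-step:
move `n - |ℓ|` letters of the context `x, y` into the rule. Since `R` is homogeneous, every word
in an `R`-derivation starting from `u` has length `|u| ≥ n`, so each step can be replaced.
-/

namespace Relation.EqvGen

variable {β : Type*} {r s : β → β → Prop} {P : β → Prop}

theorem iff_of_forall_iff (hP : ∀ a b, r a b → (P a ↔ P b)) {a b : β}
    (h : EqvGen r a b) : P a ↔ P b := by
  induction h with
  | rel _ _ hab => exact hP _ _ hab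
  | refl => rfl
  | symm _ _ _ ih => exact ih.symm
  | trans _ _ _ _ _ ih₁ ih₂ => exact ih₁.trans ih₂

theorem of_invariant (hP : ∀ a b, r a b → (P a ↔ P b)) (hrs : ∀ a b, r a b → P a → s a b)
    {a b : β} (h : EqvGen r a b) (ha : P a) : EqvGen s a b := by
  induction h with
  | rel _ _ hab => exact .rel _ _ (hrs _ _ hab ha)
  | refl => exact .refl _
  | symm _ _ hab ih => exact (ih ((iff_of_forall_iff hP hab).2 ha)).symm
  | trans _ _ _ hab _ ih₁ ih₂ =>
    exact (ih₁ ha).trans _ _ _ (ih₂ ((iff_of_forall_iff hP hab).1 ha))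

end Relation.EqvGen

theorem List.exists_append_append_length_eq {α : Type*} (x y : List α) {k : ℕ}
    (hk : k ≤ x.length + y.length) :
    ∃ x₁ x₂ y₁ y₂ : List α, x = x₁ ++ x₂ ∧ y = y₁ ++ y₂ ∧ x₂.length + y₁.length = k := by
  set i := min k y.length
  refine ⟨x.take (x.length - (k - i)), x.drop (x.length - (k - i)), y.take i, y.drop i,
    (x.take_append_drop _).symm, (y.take_append_drop _).symm, ?_⟩
  simp only [List.length_drop, List.length_take]
  omega

namespace Step

variable {α : Type*} {R : Set (List α × List α)}

def paddedRules (R : Set (List α × List α)) (n : ℕ) : Set (List α × List α) :=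
  {q | ∃ l r u' v' : List α, (l, r) ∈ R ∧ q = (u' ++ l ++ v', u' ++ r ++ v') ∧
    (u' ++ l ++ v').length = n}

theorem length_eq (hhom : ∀ p ∈ R, p.1.length = p.2.length) {u v : List α}
    (h : Step R u v) : u.length = v.length := by
  obtain ⟨x, y, l, r, hlr, rfl, rfl⟩ := h
  simp [hhom _ hlr]

theorem of_paddedRules {n : ℕ} {u v : List α} (h : Step (paddedRules R n) u v) : Step R u v := by
  obtain ⟨x, y, _, _, ⟨l, r, u', v', hlr, hq, -⟩, rfl, rfl⟩ := h
  obtain ⟨rfl, rfl⟩ := Prod.mk.inj hq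
  exact ⟨x ++ u', v' ++ y, l, r, hlr, by simp, by simp⟩

theorem paddedRules_of_le_length {n : ℕ} (hmax : ∀ p ∈ R, p.1.length ≤ n) {u v : List α}
    (h : Step R u v) (hu : n ≤ u.length) : Step (paddedRules R n) u v := by
  obtain ⟨x, y, l, r, hlr, rfl, rfl⟩ := h
  have hl := hmax _ hlr
  simp only [List.length_append] at hu
  obtain ⟨x₁, x₂, y₁, y₂, rfl, rfl, hlen⟩ :=
    List.exists_append_append_length_eq x y (k := n - l.length) (by omega)
  refine ⟨x₁, y₂, x₂ ++ l ++ y₁, x₂ ++ r ++ y₁, ⟨l, r, x₂, y₁, hlr, rfl, ?_⟩, by simp, by simp⟩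
  simp only [List.length_append] at hl ⊢
  omega

end Step

theorem stmt_14_general {α : Type*} (R : Set (List α × List α)) (n : ℕ)
    (hhom : ∀ p ∈ R, p.1.length = p.2.length)
    (hmax : ∀ p ∈ R, p.1.length ≤ n) :
    ∀ u v : List α, n ≤ u.length →
      (Relation.EqvGen
          (Step {q : List α × List α | ∃ l r u' v' : List α,
            (l, r) ∈ R ∧ q = (u' ++ l ++ v', u' ++ r ++ v') ∧
              (u' ++ l ++ v').length = n}) u v
        ↔ Relation.EqvGen (Step R) u v) := by
  intro u v hu
  refine ⟨Relation.EqvGen.mono (fun _ _ ↦ Step.of_paddedRules) u v, fun h ↦ ?_⟩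
  refine h.of_invariant (P := fun w ↦ n ≤ w.length) (fun a b hab ↦ ?_)
    (fun _ _ ↦ Step.paddedRules_of_le_length hmax) hu
  simp only [Step.length_eq hhom hab]

/-- For a homogeneous system `R` and `n` at least the maximal rule length,
let `R' = {(uℓv, urv) : (ℓ,r) ∈ R, |uℓv| = n}`.  Then for words of length
at least `n` the Thue congruences of `R` and `R'` coincide; hence the map
sending the `↔*_{R'}`-class of a word of length `≥ n` to its `↔*_R`-class is
a well-defined bijection between the corresponding ideals. -/
theorem stmt_14 {α : Type*} [Fintype α] (R : Set (List α × List α)) (n : ℕ)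
    (hhom : ∀ p ∈ R, p.1.length = p.2.length)
    (hmax : ∀ p ∈ R, p.1.length ≤ n) :
    ∀ u v : List α, n ≤ u.length →
      (Relation.EqvGen
          (Step {q : List α × List α | ∃ l r u' v' : List α,
            (l, r) ∈ R ∧ q = (u' ++ l ++ v', u' ++ r ++ v') ∧
              (u' ++ l ++ v').length = n}) u v
        ↔ Relation.EqvGen (Step R) u v) :=
  stmt_14_general R n hhom hmax
end
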